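/- arXiv:2309.04897 — 8 statements merged into one kernel-verified Lean document; each statement's English description precedes it below -/
import Mathlib

section
/- (Reflection equation for the unfused R- and K-matrices.) For all q, 𝔞, 𝔠 ∈ ℂ and x, y ∈ ℂ \ {0} with q·xy ≠ 1, q·(x/y) ≠ 1, 𝔠x² + x − 𝔞 ≠ 0 and 𝔠y² + y − 𝔞 ≠ 0, the following identity of operators on ℂ² ⊗ ℂ² holds: K(y)₂ ∘ R(xy)_{1,2} ∘ K(x)₁ ∘ R(x/y)_{2,1} = R(x/y)_{1,2} ∘ K(x)₁ ∘ R(xy)_{2,1} ∘ K(y)₂, where K(v)₁ := K(v) ⊗ Id, K(v)₂ := Id ⊗ K(v), R(v)_{1,2} := R(v), and R(v)_{2,1} := P ∘ R(v) ∘ P with P the operator swapping the two tensor factors. -/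
open scoped Matrix ComplexOrder

noncomputable section

/-- Entries `R(u)_{a,b}^{c,d}` of the unfused stochastic six-vertex `R`-matrix. -/
def Rent (q u : ℂ) (a b c d : Fin 2) : ℂ :=
  if a = 0 ∧ b = 0 ∧ c = 0 ∧ d = 0 then 1
  else if a = 1 ∧ b = 1 ∧ c = 1 ∧ d = 1 then 1
  else if a = 0 ∧ b = 1 ∧ c = 0 ∧ d = 1 then q * (1 - u) / (1 - q * u)
  else if a = 0 ∧ b = 1 ∧ c = 1 ∧ d = 0 then (1 - q) / (1 - q * u)
  else if a = 1 ∧ b = 0 ∧ c = 0 ∧ d = 1 then u * (1 - q) / (1 - q * u)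
  else if a = 1 ∧ b = 0 ∧ c = 1 ∧ d = 0 then (1 - u) / (1 - q * u)
  else 0

/-- The unfused `R`-matrix as an operator (matrix) on `ℂ² ⊗ ℂ²`;
row index `(c,d)` (output), column index `(a,b)` (input), so that
`R(u)(e_a ⊗ e_b) = Σ_{c,d} R(u)_{a,b}^{c,d} e_c ⊗ e_d`. -/
def Rmat (q u : ℂ) : Matrix (Fin 2 × Fin 2) (Fin 2 × Fin 2) ℂ :=
  fun cd ab => Rent q u ab.1 ab.2 cd.1 cd.2

/-- Entries `K(u)_a^d` of the unfused boundary `K`-matrix, parameters `fa = 𝔞`, `fc = 𝔠`. -/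
def Kent (fa fc u : ℂ) (a d : Fin 2) : ℂ :=
  if a = 0 ∧ d = 0 then ((fc - fa) * u ^ 2 + u) / (fc * u ^ 2 + u - fa)
  else if a = 0 ∧ d = 1 then fa * (u ^ 2 - 1) / (fc * u ^ 2 + u - fa)
  else if a = 1 ∧ d = 0 then fc * (u ^ 2 - 1) / (fc * u ^ 2 + u - fa)
  else (fc - fa + u) / (fc * u ^ 2 + u - fa)

/-- The unfused `K`-matrix as an operator on `ℂ²`: row `d` (output), column `a` (input). -/
def Kmat (fa fc u : ℂ) : Matrix (Fin 2) (Fin 2) ℂ := fun d a => Kent fa fc u a d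

/-- Entries `K̄(u)_b^c` of the unfused boundary `K̄`-matrix, parameters `fb = 𝔟`, `fd = 𝔡`. -/
def Kbent (fb fd u : ℂ) (b c : Fin 2) : ℂ :=
  if b = 0 ∧ c = 0 then ((fb - fd) * u ^ 2 - u) / (fb * u ^ 2 - u - fd)
  else if b = 0 ∧ c = 1 then fd * (u ^ 2 - 1) / (fb * u ^ 2 - u - fd)
  else if b = 1 ∧ c = 0 then fb * (u ^ 2 - 1) / (fb * u ^ 2 - u - fd)
  else (fb - fd - u) / (fb * u ^ 2 - u - fd)

/-- The operator `P` on `ℂ² ⊗ ℂ²` swapping the two tensor factors. -/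
def swapMat : Matrix (Fin 2 × Fin 2) (Fin 2 × Fin 2) ℂ :=
  fun p r => if p.1 = r.2 ∧ p.2 = r.1 then 1 else 0

/-- `Ř(u) = P ∘ R(u)`. -/
def RcheckMat (q u : ℂ) : Matrix (Fin 2 × Fin 2) (Fin 2 × Fin 2) ℂ := swapMat * Rmat q u

/-- A two-site operator `T` placed at sites `i, j` of an `n`-fold tensor power of `ℂ²`,
acting as the identity on the other factors.  Here `(ℂ²)^{⊗n}` is identified with the
function space `(Fin n → Fin 2) → ℂ` with its standard basis. -/
def emb2 {n : ℕ} (i j : Fin n) (T : Matrix (Fin 2 × Fin 2) (Fin 2 × Fin 2) ℂ) :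
    Matrix (Fin n → Fin 2) (Fin n → Fin 2) ℂ :=
  fun x y => T (x i, x j) (y i, y j) * (if ∀ k, k ≠ i → k ≠ j → x k = y k then 1 else 0)

/-- A one-site operator `T` placed at site `i` of an `n`-fold tensor power of `ℂ²`. -/
def emb1 {n : ℕ} (i : Fin n) (T : Matrix (Fin 2) (Fin 2) ℂ) :
    Matrix (Fin n → Fin 2) (Fin n → Fin 2) ℂ :=
  fun x y => T (x i) (y i) * (if ∀ k, k ≠ i → x k = y k then 1 else 0)

/-- The permutation operator `P_ω` on `(ℂ²)^{⊗n}`: it puts the `k`-th factor in position `ω(k)`. -/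
def permMat (n : ℕ) (ω : Equiv.Perm (Fin n)) :
    Matrix (Fin n → Fin 2) (Fin n → Fin 2) ℂ :=
  fun x y => if (fun k => x (ω k)) = y then 1 else 0

/-- `inv(a)` : the number of inversions of a `{0,1}`-word. -/
def invCount {I : ℕ} (x : Fin I → Fin 2) : ℕ :=
  (Finset.univ.filter (fun p : Fin I × Fin I => p.1 < p.2 ∧ x p.2 < x p.1)).card

/-- `Z_q(I;m)`. -/
def Zq (I : ℕ) (q : ℂ) (m : ℕ) : ℂ :=
  ∑ x ∈ Finset.univ.filter (fun x : Fin I → Fin 2 => (∑ j, ((x j : ℕ))) = m),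
    q ^ invCount x

/-- The projection `Π : (ℂ²)^{⊗I} → ℂ^{I+1}`, `e_{a₁…a_I} ↦ e_{Σ a_j}`. -/
def PiMat (I : ℕ) : Matrix (Fin (I + 1)) (Fin I → Fin 2) ℂ :=
  fun m x => if (∑ j, ((x j : ℕ))) = (m : ℕ) then 1 else 0

/-- The injection `Π̂ : ℂ^{I+1} → (ℂ²)^{⊗I}`. -/
def hatPiMat (I : ℕ) (q : ℂ) : Matrix (Fin I → Fin 2) (Fin (I + 1)) ℂ :=
  fun x m => if (∑ j, ((x j : ℕ))) = (m : ℕ) then q ^ invCount x / Zq I q (m : ℕ) else 0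

/-- `F = Π̂ ∘ Π`, the projector onto the `q`-exchangeable subspace. -/
def Fmat (I : ℕ) (q : ℂ) : Matrix (Fin I → Fin 2) (Fin I → Fin 2) ℂ :=
  hatPiMat I q * PiMat I

/-- Restriction of a configuration on `2I` sites to the first `I` sites. -/
def firstHalf {I : ℕ} (x : Fin (2 * I) → Fin 2) : Fin I → Fin 2 :=
  fun k => x ⟨k.1, by have := k.isLt; omega⟩

/-- Restriction of a configuration on `2I` sites to the last `I` sites. -/
def secondHalf {I : ℕ} (x : Fin (2 * I) → Fin 2) : Fin I → Fin 2 :=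
  fun k => x ⟨k.1 + I, by have := k.isLt; omega⟩

/-- `F ⊗ F` acting on `(ℂ²)^{⊗2I}`. -/
def FFmat (I : ℕ) (q : ℂ) : Matrix (Fin (2 * I) → Fin 2) (Fin (2 * I) → Fin 2) ℂ :=
  fun x y => Fmat I q (firstHalf x) (firstHalf y) * Fmat I q (secondHalf x) (secondHalf y)

/-- `Π ⊗ Π : (ℂ²)^{⊗2I} → ℂ^{I+1} ⊗ ℂ^{I+1}`. -/
def PiPiMat (I : ℕ) : Matrix (Fin (I + 1) × Fin (I + 1)) (Fin (2 * I) → Fin 2) ℂ :=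
  fun p x => PiMat I p.1 (firstHalf x) * PiMat I p.2 (secondHalf x)

/-- `Π̂ ⊗ Π̂ : ℂ^{I+1} ⊗ ℂ^{I+1} → (ℂ²)^{⊗2I}`. -/
def hatPiPiMat (I : ℕ) (q : ℂ) : Matrix (Fin (2 * I) → Fin 2) (Fin (I + 1) × Fin (I + 1)) ℂ :=
  fun x p => hatPiMat I q (firstHalf x) p.1 * hatPiMat I q (secondHalf x) p.2

/-- The fused bulk operator `R̊^I(u)` on `(ℂ²)^{⊗2I}` : the ordered product (composition,
factors written from left to right) over `a = I, I-1, …, 1` and, inside, `b = 1, 2, …, I`,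
of the operators `R(u q^{b-a})_{b, a+I}` (sites are 1-based; here `a = I - a'`, `b = b' + 1`). -/
def Rring (I : ℕ) (q u : ℂ) : Matrix (Fin (2 * I) → Fin 2) (Fin (2 * I) → Fin 2) ℂ :=
  ((List.finRange I).map (fun a' =>
    ((List.finRange I).map (fun b' =>
      emb2 (⟨b'.1, by have := b'.isLt; omega⟩ : Fin (2 * I))
        ⟨2 * I - 1 - a'.1, by have := a'.isLt; omega⟩
        (Rmat q (u * q ^ (((b'.1 : ℤ) + 1) - ((I : ℤ) - (a'.1 : ℤ))))))).prod)).prod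

/-- The fused `R`-matrix `R^I(u) = (Π⊗Π) ∘ R̊^I(u) ∘ (Π̂⊗Π̂)` on `ℂ^{I+1} ⊗ ℂ^{I+1}`;
its entry at row `(c,d)`, column `(a,b)` is `R^I(u)_{a,b}^{c,d}`. -/
def RI (I : ℕ) (q u : ℂ) :
    Matrix (Fin (I + 1) × Fin (I + 1)) (Fin (I + 1) × Fin (I + 1)) ℂ :=
  PiPiMat I * Rring I q u * hatPiPiMat I q

/-- Real powers of a positive real number, viewed in `ℂ`. -/
def qrpow (q : ℝ) (r : ℝ) : ℂ := ((q ^ r : ℝ) : ℂ)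

/-- The fused boundary operator `K̊^I(u)` on `(ℂ²)^{⊗I}` : `P_rev` composed with the ordered
product over `a = I, …, 1` of `K(u q^{(I+1)/2-a})_a` composed with the ordered product over
`b = a-1, …, 1` of `R(u² q^{I+1-a-b})_{b,a}` (sites 1-based; `a = I - a'`, `b = a - 1 - b'`). -/
def Kring (I : ℕ) (q : ℝ) (fa fc : ℂ) (u : ℂ) :
    Matrix (Fin I → Fin 2) (Fin I → Fin 2) ℂ :=
  permMat I (Fin.revPerm) *
  ((List.finRange I).map (fun a' =>
    emb1 (⟨I - 1 - a'.1, by have := a'.isLt; omega⟩ : Fin I)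
        (Kmat fa fc (u * qrpow q (((I : ℝ) + 1) / 2 - ((I : ℝ) - (a'.1 : ℝ))))) *
    ((List.finRange (I - 1 - a'.1)).map (fun b' =>
      emb2 (⟨I - a'.1 - 2 - b'.1, by have := a'.isLt; have := b'.isLt; omega⟩ : Fin I)
        ⟨I - 1 - a'.1, by have := a'.isLt; omega⟩
        (Rmat (q : ℂ)
          (u ^ 2 * (q : ℂ) ^ (((I : ℤ) + 1) - ((I : ℤ) - (a'.1 : ℤ)) -
            ((I : ℤ) - (a'.1 : ℤ) - 1 - (b'.1 : ℤ))))))).prod)).prod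

/-- The fused `K`-matrix `K^I(u) = Π ∘ K̊^I(u) ∘ Π̂` on `ℂ^{I+1}`;
its entry at row `d`, column `a` is `K^I(u)_a^d`. -/
def KI (I : ℕ) (q : ℝ) (fa fc u : ℂ) : Matrix (Fin (I + 1)) (Fin (I + 1)) ℂ :=
  PiMat I * Kring I q fa fc u * hatPiMat I (q : ℂ)

/-- `M₀(u) = u·1 + 𝐞`, `M₁(u) = u⁻¹·1 + 𝐝` in a ℂ-algebra `A`. -/
def Mop {A : Type*} [Ring A] [Algebra ℂ A] (dd ee : A) (i : Fin 2) (u : ℂ) : A :=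
  if i = 0 then algebraMap ℂ A u + ee else algebraMap ℂ A u⁻¹ + dd

/-- The fused elements `M^I_ζ(u)`. -/
def MIop {A : Type*} [Ring A] [Algebra ℂ A] (dd ee : A) (I : ℕ) (q : ℝ) (ζ : ℕ) (u : ℂ) : A :=
  ∑ z ∈ Finset.univ.filter (fun z : Fin I → Fin 2 => (∑ j, ((z j : ℕ))) = ζ),
    ((List.finRange I).map (fun a =>
      Mop dd ee (z a) (u * qrpow q (((a.1 : ℝ) + 1) - ((I : ℝ) + 1) / 2)))).prod

end

/-- `K ⊗ Id` on `ℂ² ⊗ ℂ²`. -/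
noncomputable def oneSite1 (K : Matrix (Fin 2) (Fin 2) ℂ) :
    Matrix (Fin 2 × Fin 2) (Fin 2 × Fin 2) ℂ :=
  fun p r => K p.1 r.1 * (if p.2 = r.2 then 1 else 0)

/-- `Id ⊗ K` on `ℂ² ⊗ ℂ²`. -/
noncomputable def oneSite2 (K : Matrix (Fin 2) (Fin 2) ℂ) :
    Matrix (Fin 2 × Fin 2) (Fin 2 × Fin 2) ℂ :=
  fun p r => K p.2 r.2 * (if p.1 = r.1 then 1 else 0)

/- Clearing the denominators of `R(a/b)` and `K(u)` turns the reflection equation into a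
polynomial identity between 4×4 matrices, which is checked entrywise; the scalar
prefactors on the two sides are the same. -/

open scoped Kronecker

def RmatHom (q a b : ℂ) : Matrix (Fin 2 × Fin 2) (Fin 2 × Fin 2) ℂ :=
  fun cd ab =>
    if ab.1 = 0 ∧ ab.2 = 0 ∧ cd.1 = 0 ∧ cd.2 = 0 then b - q * a
    else if ab.1 = 1 ∧ ab.2 = 1 ∧ cd.1 = 1 ∧ cd.2 = 1 then b - q * a
    else if ab.1 = 0 ∧ ab.2 = 1 ∧ cd.1 = 0 ∧ cd.2 = 1 then q * (b - a)
    else if ab.1 = 0 ∧ ab.2 = 1 ∧ cd.1 = 1 ∧ cd.2 = 0 then (1 - q) * b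
    else if ab.1 = 1 ∧ ab.2 = 0 ∧ cd.1 = 0 ∧ cd.2 = 1 then a * (1 - q)
    else if ab.1 = 1 ∧ ab.2 = 0 ∧ cd.1 = 1 ∧ cd.2 = 0 then b - a
    else 0

def KmatNum (fa fc u : ℂ) : Matrix (Fin 2) (Fin 2) ℂ :=
  fun d a =>
    if a = 0 ∧ d = 0 then (fc - fa) * u ^ 2 + u
    else if a = 0 ∧ d = 1 then fa * (u ^ 2 - 1)
    else if a = 1 ∧ d = 0 then fc * (u ^ 2 - 1)
    else fc - fa + u

lemma Rmat_div_eq_smul_RmatHom (q a b : ℂ) (hb : b ≠ 0) (hba : b - q * a ≠ 0) :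
    Rmat q (a / b) = (b - q * a)⁻¹ • RmatHom q a b := by
  have hden : 1 - q * (a / b) ≠ 0 := by
    rw [show 1 - q * (a / b) = (b - q * a) / b by field_simp]
    exact div_ne_zero hba hb
  ext ⟨c, d⟩ ⟨a, b⟩
  fin_cases a <;> fin_cases b <;> fin_cases c <;> fin_cases d <;>
    simp [Rmat, Rent, RmatHom] <;> field_simp

lemma Kmat_eq_smul_KmatNum (fa fc u : ℂ) :
    Kmat fa fc u = (fc * u ^ 2 + u - fa)⁻¹ • KmatNum fa fc u := by
  ext d a
  fin_cases d <;> fin_cases a <;> simp [Kmat, Kent, KmatNum, div_eq_inv_mul]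

lemma oneSite1_eq_kronecker (K : Matrix (Fin 2) (Fin 2) ℂ) : oneSite1 K = K ⊗ₖ 1 := by
  ext ⟨a, b⟩ ⟨c, d⟩
  simp [oneSite1, Matrix.one_apply]

lemma oneSite2_eq_kronecker (K : Matrix (Fin 2) (Fin 2) ℂ) : oneSite2 K = 1 ⊗ₖ K := by
  ext ⟨a, b⟩ ⟨c, d⟩
  simp [oneSite2, Matrix.one_apply, mul_comm]

lemma swapMat_mul_mul_swapMat (M : Matrix (Fin 2 × Fin 2) (Fin 2 × Fin 2) ℂ) :
    swapMat * M * swapMat = M.submatrix Prod.swap Prod.swap := by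
  ext ⟨c, d⟩ ⟨a, b⟩
  fin_cases a <;> fin_cases b <;> fin_cases c <;> fin_cases d <;>
    simp [Matrix.mul_apply, swapMat, Fintype.sum_prod_type, Fin.sum_univ_two]

lemma reflection_equation_hom (q fa fc x y : ℂ) :
    (1 ⊗ₖ KmatNum fa fc y) * RmatHom q (x * y) 1 * (KmatNum fa fc x ⊗ₖ 1) *
        (RmatHom q x y).submatrix Prod.swap Prod.swap =
      RmatHom q x y * (KmatNum fa fc x ⊗ₖ 1) *
        (RmatHom q (x * y) 1).submatrix Prod.swap Prod.swap * (1 ⊗ₖ KmatNum fa fc y) := by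
  ext ⟨c, d⟩ ⟨a, b⟩
  fin_cases a <;> fin_cases b <;> fin_cases c <;> fin_cases d <;>
    simp [Matrix.mul_apply, Fintype.sum_prod_type, Fin.sum_univ_two, Matrix.one_apply,
      RmatHom, KmatNum] <;>
    ring

theorem reflection_equation_general (q fa fc x y : ℂ) (hy : y ≠ 0)
    (h1 : q * (x * y) ≠ 1) (h2 : q * (x / y) ≠ 1) :
    oneSite2 (Kmat fa fc y) * Rmat q (x * y) * oneSite1 (Kmat fa fc x) *
        (swapMat * Rmat q (x / y) * swapMat) =
      Rmat q (x / y) * oneSite1 (Kmat fa fc x) *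
        (swapMat * Rmat q (x * y) * swapMat) * oneSite2 (Kmat fa fc y) := by
  have hxy : Rmat q (x * y) = (1 - q * (x * y))⁻¹ • RmatHom q (x * y) 1 := by
    simpa using Rmat_div_eq_smul_RmatHom q (x * y) 1 one_ne_zero (sub_ne_zero.2 h1.symm)
  have hyqx : y - q * x ≠ 0 := by
    rw [show y - q * x = y * (1 - q * (x / y)) by field_simp]
    exact mul_ne_zero hy (sub_ne_zero.2 h2.symm)
  rw [hxy, Rmat_div_eq_smul_RmatHom q x y hy hyqx, Kmat_eq_smul_KmatNum fa fc x,
    Kmat_eq_smul_KmatNum fa fc y, oneSite1_eq_kronecker, oneSite2_eq_kronecker,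
    swapMat_mul_mul_swapMat, swapMat_mul_mul_swapMat]
  simp only [Matrix.smul_kronecker, Matrix.kronecker_smul, Matrix.submatrix_smul, Pi.smul_apply,
    Matrix.mul_smul, Matrix.smul_mul, smul_smul, reflection_equation_hom]
  congr 1
  ring

/-- **Reflection equation** for the unfused `R`- and `K`-matrices:
`K(y)₂ ∘ R(xy)_{1,2} ∘ K(x)₁ ∘ R(x/y)_{2,1} = R(x/y)_{1,2} ∘ K(x)₁ ∘ R(xy)_{2,1} ∘ K(y)₂`,
where `R(v)_{2,1} = P ∘ R(v) ∘ P`. -/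
theorem reflection_equation (q fa fc x y : ℂ) (hx : x ≠ 0) (hy : y ≠ 0)
    (h1 : q * (x * y) ≠ 1) (h2 : q * (x / y) ≠ 1)
    (h3 : fc * x ^ 2 + x - fa ≠ 0) (h4 : fc * y ^ 2 + y - fa ≠ 0) :
    oneSite2 (Kmat fa fc y) * Rmat q (x * y) * oneSite1 (Kmat fa fc x) *
        (swapMat * Rmat q (x / y) * swapMat) =
      Rmat q (x / y) * oneSite1 (Kmat fa fc x) *
        (swapMat * Rmat q (x * y) * swapMat) * oneSite2 (Kmat fa fc y) :=
  reflection_equation_general q fa fc x y hy h1 h2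
end

section
/- (Stochasticity and positivity of the unfused K-matrix.) Suppose 𝔞, 𝔠 ∈ ℝ with 𝔞 > 0, 𝔠 > 0, and u ∈ ℝ with 0 < u < 1 and 𝔞 − 𝔠 > 1/u. Then 𝔠u² + u − 𝔞 ≠ 0, all four entries K(u)_0^0, K(u)_0^1, K(u)_1^0, K(u)_1^1 are strictly positive, and Σ_{d ∈ {0,1}} K(u)_a^d = 1 for each a ∈ {0,1}. -/
open scoped Matrix ComplexOrder

/-! In each row of `K(u)` the two numerators add up to the common denominator, which gives
stochasticity. Positivity holds because `u (𝔞 - 𝔠) > 1` makes the denominator and all four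
numerators negative. -/

theorem Kent_row_sum {fa fc u : ℂ} (hD : fc * u ^ 2 + u - fa ≠ 0) (a : Fin 2) :
    ∑ d : Fin 2, Kent fa fc u a d = 1 := by
  rw [Fin.sum_univ_two, ← div_self hD]
  fin_cases a <;>
    simp only [Kent, Fin.zero_eta, Fin.mk_one, Fin.isValue, one_ne_zero, zero_ne_one, and_self,
      and_true, and_false, reduceIte] <;>
    rw [← add_div] <;> ring

section

variable {fa fc u : ℝ}

theorem Kent_denom_neg (hfc : 0 < fc) (hu0 : 0 < u) (hu2 : u ^ 2 < 1)
    (hgap : 1 < (fa - fc) * u) : fc * u ^ 2 + u - fa < 0 := by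
  nlinarith [mul_pos (mul_pos hfc hu0) (sub_pos.mpr hu2)]

theorem Kent_num00_neg (hu0 : 0 < u) (hgap : 1 < (fa - fc) * u) :
    (fc - fa) * u ^ 2 + u < 0 := by
  nlinarith

theorem Kent_num11_neg (hu0 : 0 < u) (hu2 : u ^ 2 < 1) (hgap : 1 < (fa - fc) * u) :
    fc - fa + u < 0 := by
  nlinarith

theorem Kent_ofReal_pos (hfa : 0 < fa) (hfc : 0 < fc) (hu2 : u ^ 2 < 1)
    (hD : fc * u ^ 2 + u - fa < 0) (h00 : (fc - fa) * u ^ 2 + u < 0) (h11 : fc - fa + u < 0)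
    (a d : Fin 2) : 0 < Kent (fa : ℂ) (fc : ℂ) (u : ℂ) a d := by
  have h01 : fa * (u ^ 2 - 1) < 0 := mul_neg_of_pos_of_neg hfa (by linarith)
  have h10 : fc * (u ^ 2 - 1) < 0 := mul_neg_of_pos_of_neg hfc (by linarith)
  fin_cases a <;> fin_cases d <;>
    simp only [Kent, Fin.zero_eta, Fin.mk_one, Fin.isValue, one_ne_zero, zero_ne_one, and_self,
      and_true, and_false, reduceIte] <;>
    exact_mod_cast div_pos_of_neg_of_neg ‹_› hD

end

/-- **Stochasticity and positivity of the unfused `K`-matrix**: for real `𝔞, 𝔠 > 0`,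
`0 < u < 1` and `𝔞 − 𝔠 > 1/u`, the denominator is nonzero, all four entries are strictly
positive (in the `ComplexOrder`), and the rows sum to one. -/
theorem K_stochastic_positive (fa fc u : ℝ) (hfa : 0 < fa) (hfc : 0 < fc)
    (hu0 : 0 < u) (hu1 : u < 1) (hgap : fa - fc > 1 / u) :
    fc * u ^ 2 + u - fa ≠ 0 ∧
    (0 < Kent (fa : ℂ) (fc : ℂ) (u : ℂ) 0 0 ∧ 0 < Kent (fa : ℂ) (fc : ℂ) (u : ℂ) 0 1 ∧
      0 < Kent (fa : ℂ) (fc : ℂ) (u : ℂ) 1 0 ∧ 0 < Kent (fa : ℂ) (fc : ℂ) (u : ℂ) 1 1) ∧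
    (∀ a : Fin 2, ∑ d : Fin 2, Kent (fa : ℂ) (fc : ℂ) (u : ℂ) a d = 1) := by
  have hgap' : 1 < (fa - fc) * u := (div_lt_iff₀ hu0).mp hgap
  have hu2 : u ^ 2 < 1 := by nlinarith
  have hD := Kent_denom_neg hfc hu0 hu2 hgap'
  have hpos := Kent_ofReal_pos hfa hfc hu2 hD (Kent_num00_neg hu0 hgap')
    (Kent_num11_neg hu0 hu2 hgap')
  refine ⟨hD.ne, ⟨hpos 0 0, hpos 0 1, hpos 1 0, hpos 1 1⟩, Kent_row_sum ?_⟩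
  exact_mod_cast hD.ne
end

section
/- (Stochasticity and positivity of the unfused K̄-matrix.) Suppose 𝔟, 𝔡 ∈ ℝ with 𝔟 > 0, 𝔡 > 0, and u ∈ ℝ with u > 1 and 𝔟 − 𝔡 > u. Then 𝔟u² − u − 𝔡 ≠ 0, all four entries K̄(u)_0^0, K̄(u)_0^1, K̄(u)_1^0, K̄(u)_1^1 are strictly positive, and Σ_{c ∈ {0,1}} K̄(u)_b^c = 1 for each b ∈ {0,1}. -/
open scoped Matrix ComplexOrder

/-! Since `𝔟 > 𝔡 + u` and `u² > 1`, the denominator satisfies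
`𝔟u² − u − 𝔡 > (𝔡 + u)(u² − 1) > 0`, and each numerator is visibly positive under the same
hypotheses. Stochasticity is the identity that the two numerators of a row add up to the
denominator. -/

theorem Kbent_denom_pos {fb fd u : ℝ} (hfd : 0 < fd) (hu : 1 < u) (hgap : u < fb - fd) :
    0 < fb * u ^ 2 - u - fd := by
  nlinarith [mul_lt_mul_of_pos_right hgap (show (0 : ℝ) < u ^ 2 - 1 by nlinarith)]

theorem Kbent_pos {fb fd u : ℝ} (hfd : 0 < fd) (hu : 1 < u) (hgap : u < fb - fd)
    (b c : Fin 2) : 0 < Kbent fb fd u b c := by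
  have hD : (0 : ℂ) < fb * u ^ 2 - u - fd := by exact_mod_cast Kbent_denom_pos hfd hu hgap
  have hu2 : 0 < u ^ 2 - 1 := by nlinarith
  have h00 : (0 : ℂ) < (fb - fd) * u ^ 2 - u := by
    exact_mod_cast (by nlinarith : (0 : ℝ) < (fb - fd) * u ^ 2 - u)
  have h01 : (0 : ℂ) < fd * (u ^ 2 - 1) := by exact_mod_cast mul_pos hfd hu2
  have h10 : (0 : ℂ) < fb * (u ^ 2 - 1) := by exact_mod_cast mul_pos (by linarith) hu2
  have h11 : (0 : ℂ) < fb - fd - u := by exact_mod_cast (by linarith : (0 : ℝ) < fb - fd - u)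
  fin_cases b <;> fin_cases c <;>
    simp only [Kbent, Fin.zero_eta, Fin.mk_one, Fin.isValue, zero_ne_one, one_ne_zero,
      and_self, and_true, and_false, ↓reduceIte] <;>
    exact div_pos ‹_› hD

theorem Kbent_row_sum {fb fd u : ℂ} (h : fb * u ^ 2 - u - fd ≠ 0) (b : Fin 2) :
    ∑ c, Kbent fb fd u b c = 1 := by
  rw [Fin.sum_univ_two]
  fin_cases b <;> simp [Kbent, ← add_div, div_eq_one_iff_eq h] <;> ring

theorem Kbar_stochastic_positive_general (fb fd u : ℝ) (hfd : 0 < fd)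
    (hu : 1 < u) (hgap : fb - fd > u) :
    fb * u ^ 2 - u - fd ≠ 0 ∧
    (0 < Kbent (fb : ℂ) (fd : ℂ) (u : ℂ) 0 0 ∧ 0 < Kbent (fb : ℂ) (fd : ℂ) (u : ℂ) 0 1 ∧
      0 < Kbent (fb : ℂ) (fd : ℂ) (u : ℂ) 1 0 ∧ 0 < Kbent (fb : ℂ) (fd : ℂ) (u : ℂ) 1 1) ∧
    (∀ b : Fin 2, ∑ c : Fin 2, Kbent (fb : ℂ) (fd : ℂ) (u : ℂ) b c = 1) := by
  have hD := Kbent_denom_pos hfd hu hgap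
  refine ⟨hD.ne', ⟨Kbent_pos hfd hu hgap 0 0, Kbent_pos hfd hu hgap 0 1,
    Kbent_pos hfd hu hgap 1 0, Kbent_pos hfd hu hgap 1 1⟩, Kbent_row_sum ?_⟩
  exact_mod_cast hD.ne'

/-- **Stochasticity and positivity of the unfused `K̄`-matrix**: for real `𝔟, 𝔡 > 0`,
`u > 1` and `𝔟 − 𝔡 > u`, the denominator is nonzero, all four entries are strictly
positive (in the `ComplexOrder`), and the rows sum to one. -/
theorem Kbar_stochastic_positive (fb fd u : ℝ) (hfb : 0 < fb) (hfd : 0 < fd)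
    (hu : 1 < u) (hgap : fb - fd > u) :
    fb * u ^ 2 - u - fd ≠ 0 ∧
    (0 < Kbent (fb : ℂ) (fd : ℂ) (u : ℂ) 0 0 ∧ 0 < Kbent (fb : ℂ) (fd : ℂ) (u : ℂ) 0 1 ∧
      0 < Kbent (fb : ℂ) (fd : ℂ) (u : ℂ) 1 0 ∧ 0 < Kbent (fb : ℂ) (fd : ℂ) (u : ℂ) 1 1) ∧
    (∀ b : Fin 2, ∑ c : Fin 2, Kbent (fb : ℂ) (fd : ℂ) (u : ℂ) b c = 1) :=
  Kbar_stochastic_positive_general fb fd u hfd hu hgap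
end

section
/- (Unfused Zamolodchikov–Faddeev relation.) Let q ∈ ℂ. For all x, y ∈ ℂ \ {0} with q·(x/y) ≠ 1 and all c, d ∈ {0,1}, the following identity holds in A: M_c(y) · M_d(x) = Σ_{a,b ∈ {0,1}} R(x/y)_{b,a}^{d,c} · M_b(x) · M_a(y). -/
open scoped Matrix ComplexOrder

/-! The scalars `u·1` are central, so `M_c(x)` and `M_c(y)` commute, which is the diagonal case.
In the two mixed cases, after clearing the denominator `1 - q x/y`, the relation
`𝐝𝐞 = q 𝐞𝐝 + (1 - q)` brings both sides into the span of `1, 𝐝, 𝐞, 𝐞𝐝`, where they agree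
coefficientwise by an identity of rational functions in `q, x, y`. -/

lemma eq_div_smul_add_div_smul {K M : Type*} [Field K] [AddCommGroup M] [Module K M]
    {s a b : K} {m n p : M} (hs : s ≠ 0) (h : s • m = a • n + b • p) :
    m = (a / s) • n + (b / s) • p := by
  rw [div_eq_inv_mul, div_eq_inv_mul, mul_smul, mul_smul, ← smul_add, ← h, inv_smul_smul₀ hs]

section ZamolodchikovFaddeev

variable {A : Type*} [Ring A] [Algebra ℂ A] {q : ℂ} {dd ee : A}

lemma Mop_zero (u : ℂ) : Mop dd ee 0 u = algebraMap ℂ A u + ee := rfl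

lemma Mop_one (u : ℂ) : Mop dd ee 1 u = algebraMap ℂ A u⁻¹ + dd := rfl

lemma Mop_commute (i : Fin 2) (x y : ℂ) : Commute (Mop dd ee i x) (Mop dd ee i y) := by
  fin_cases i <;>
  · simp only [Fin.zero_eta, Fin.mk_one, Mop_zero, Mop_one]
    exact (Algebra.commute_algebraMap_right _ _).add_right
      ((Algebra.commute_algebraMap_left _ _).add_left (Commute.refl _))

variable (hde : dd * ee - q • (ee * dd) = (1 - q) • (1 : A)) {x y : ℂ} (hx : x ≠ 0) (hy : y ≠ 0)
include hde hx hy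

lemma smul_Mop_zero_mul_Mop_one :
    (1 - q * (x / y)) • (Mop dd ee 0 y * Mop dd ee 1 x) =
      (1 - x / y) • (Mop dd ee 1 x * Mop dd ee 0 y) +
        (1 - q) • (Mop dd ee 0 x * Mop dd ee 1 y) := by
  rw [← sub_eq_zero]
  simp only [Mop_zero, Mop_one, Algebra.algebraMap_eq_smul_one, add_mul, mul_add, smul_mul_assoc,
    mul_smul_comm, one_mul, mul_one, smul_smul, smul_add, eq_add_of_sub_eq hde]
  match_scalars <;> field_simp <;> ring

lemma smul_Mop_one_mul_Mop_zero :
    (1 - q * (x / y)) • (Mop dd ee 1 y * Mop dd ee 0 x) =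
      (x / y * (1 - q)) • (Mop dd ee 1 x * Mop dd ee 0 y) +
        (q * (1 - x / y)) • (Mop dd ee 0 x * Mop dd ee 1 y) := by
  rw [← sub_eq_zero]
  simp only [Mop_zero, Mop_one, Algebra.algebraMap_eq_smul_one, add_mul, mul_add, smul_mul_assoc,
    mul_smul_comm, one_mul, mul_one, smul_smul, smul_add, eq_add_of_sub_eq hde]
  match_scalars <;> field_simp <;> ring

end ZamolodchikovFaddeev

/-- **Unfused Zamolodchikov–Faddeev relation**: if `𝐝𝐞 − q𝐞𝐝 = (1−q)·1` in a ℂ-algebra `A`,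
then for all nonzero `x, y` with `q(x/y) ≠ 1` and all `c, d ∈ {0,1}`,
`M_c(y) M_d(x) = Σ_{a,b} R(x/y)_{b,a}^{d,c} M_b(x) M_a(y)`. -/
theorem unfused_ZF {A : Type*} [Ring A] [Algebra ℂ A] (q : ℂ) (dd ee : A)
    (hde : dd * ee - q • (ee * dd) = (1 - q) • (1 : A))
    (x y : ℂ) (hx : x ≠ 0) (hy : y ≠ 0) (hxy : q * (x / y) ≠ 1) (c d : Fin 2) :
    Mop dd ee c y * Mop dd ee d x =
      ∑ a : Fin 2, ∑ b : Fin 2,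
        Rent q (x / y) b a d c • (Mop dd ee b x * Mop dd ee a y) := by
  have hden : 1 - q * (x / y) ≠ 0 := sub_ne_zero.mpr hxy.symm
  fin_cases c <;> fin_cases d <;>
    simp only [Fin.zero_eta, Fin.mk_one, Fin.isValue, Rent, and_self, and_true, and_false, true_and,
      false_and, zero_ne_one, one_ne_zero, ↓reduceIte, ite_smul, one_smul, zero_smul,
      Fin.sum_univ_two, Finset.sum_ite_eq', Finset.mem_univ, add_zero, zero_add]
  · exact (Mop_commute 0 y x).eq
  · exact eq_div_smul_add_div_smul hden (smul_Mop_zero_mul_Mop_one hde hx hy)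
  · exact eq_div_smul_add_div_smul hden (smul_Mop_one_mul_Mop_zero hde hx hy)
  · exact (Mop_commute 1 y x).eq
end

section
/- (Unfused first Ghoshal–Zamolodchikov relation.) Let q, 𝔞, 𝔠 ∈ ℂ. For all u ∈ ℂ \ {0} with 𝔠u² + u − 𝔞 ≠ 0, all d ∈ {0,1}, and all h ∈ H: W(M_d(u)·h) = Σ_{a ∈ {0,1}} K(u)_a^d · W(M_a(u⁻¹)·h). -/
open scoped Matrix ComplexOrder

/-! Both sides are affine in `W h`, `W (𝐞 • h)` and `W (𝐝 • h)`. After multiplying by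
`𝔠u² + u − 𝔞`, their difference is `(u² − 1)` (for `d = 0`), resp. `(1 − u²)` (for `d = 1`),
times `𝔞 W(𝐞 • h) − 𝔠 W(𝐝 • h) + W h`, which vanishes by the boundary condition on `W`. -/

section BoundaryFunctional

variable {A H : Type*} [Ring A] [Algebra ℂ A] [AddCommGroup H] [Module ℂ H] [Module A H]
  [IsScalarTower ℂ A H]

theorem LinearMap.map_algebraMap_add_smul (W : H →ₗ[ℂ] ℂ) (c : ℂ) (x : A) (h : H) :
    W ((algebraMap ℂ A c + x) • h) = c * W h + W (x • h) := by
  rw [add_smul, map_add, algebraMap_smul, map_smul, smul_eq_mul]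

theorem Mop_zero_smul_apply (W : H →ₗ[ℂ] ℂ) (dd ee : A) (u : ℂ) (h : H) :
    W (Mop dd ee 0 u • h) = u * W h + W (ee • h) :=
  W.map_algebraMap_add_smul u ee h

theorem Mop_one_smul_apply (W : H →ₗ[ℂ] ℂ) (dd ee : A) (u : ℂ) (h : H) :
    W (Mop dd ee 1 u • h) = u⁻¹ * W h + W (dd • h) :=
  W.map_algebraMap_add_smul u⁻¹ dd h

theorem boundary_relation_apply {fa fc : ℂ} {dd ee : A} (W : H →ₗ[ℂ] ℂ) (h : H)
    (hW : W ((fa • ee - fc • dd + 1) • h) = 0) :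
    fa * W (ee • h) - fc * W (dd • h) + W h = 0 := by
  simpa only [add_smul, sub_smul, smul_assoc, one_smul, map_add, map_sub, map_smul,
    smul_eq_mul] using hW

end BoundaryFunctional

theorem unfused_GZ_first_general {A : Type*} [Ring A] [Algebra ℂ A]
    {H : Type*} [AddCommGroup H] [Module ℂ H] [Module A H]
    [IsScalarTower ℂ A H]
    (fa fc : ℂ) (dd ee : A)
    (W : H →ₗ[ℂ] ℂ)
    (hW : ∀ h : H, W ((fa • ee - fc • dd + 1) • h) = 0)
    (u : ℂ) (hu : u ≠ 0) (hden : fc * u ^ 2 + u - fa ≠ 0) (d : Fin 2) (h : H) :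
    W (Mop dd ee d u • h) =
      ∑ a : Fin 2, Kent fa fc u a d * W (Mop dd ee a u⁻¹ • h) := by
  have hrel := boundary_relation_apply W h (hW h)
  fin_cases d <;>
    simp only [Fin.zero_eta, Fin.mk_one, Fin.sum_univ_two, Mop_zero_smul_apply,
      Mop_one_smul_apply, inv_inv, Kent, true_and, and_true,
      Fin.zero_eq_one_iff, and_self, if_true, if_false, OfNat.ofNat_ne_one, one_ne_zero, false_and]
  all_goals
    rw [div_mul_eq_mul_div, div_mul_eq_mul_div, ← add_div, eq_div_iff hden]
    field_simp
  · linear_combination (u ^ 2 - 1) * hrel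
  · linear_combination u * (1 - u ^ 2) * hrel

/-- **Unfused first Ghoshal–Zamolodchikov relation**: if `𝐝𝐞 − q𝐞𝐝 = (1−q)·1` and the
ℂ-linear functional `W` on a left `A`-module `H` (with ℂ-bilinear action) kills
`(𝔞𝐞 − 𝔠𝐝 + 1)·h` for all `h`, then for all `u ≠ 0` with `𝔠u² + u − 𝔞 ≠ 0`,
`W(M_d(u)·h) = Σ_a K(u)_a^d W(M_a(u⁻¹)·h)`. -/
theorem unfused_GZ_first {A : Type*} [Ring A] [Algebra ℂ A]
    {H : Type*} [AddCommGroup H] [Module ℂ H] [Module A H]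
    [IsScalarTower ℂ A H] [SMulCommClass ℂ A H]
    (q fa fc : ℂ) (dd ee : A)
    (hde : dd * ee - q • (ee * dd) = (1 - q) • (1 : A))
    (W : H →ₗ[ℂ] ℂ)
    (hW : ∀ h : H, W ((fa • ee - fc • dd + 1) • h) = 0)
    (u : ℂ) (hu : u ≠ 0) (hden : fc * u ^ 2 + u - fa ≠ 0) (d : Fin 2) (h : H) :
    W (Mop dd ee d u • h) =
      ∑ a : Fin 2, Kent fa fc u a d * W (Mop dd ee a u⁻¹ • h) :=
  unfused_GZ_first_general fa fc dd ee W hW u hu hden d h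
end

section
/- (Unfused second Ghoshal–Zamolodchikov relation.) Let q, 𝔟, 𝔡 ∈ ℂ. For all u ∈ ℂ \ {0} with 𝔟u² − u − 𝔡 ≠ 0 and all c ∈ {0,1}, the following identity holds in H: M_c(u)·V = Σ_{b ∈ {0,1}} K̄(u)_b^c · M_b(u⁻¹)·V. -/
open scoped Matrix ComplexOrder

/-! For `u ≠ 0` and `D := 𝔟u² − u − 𝔡 ≠ 0`, the defect `M_c(u)V − Σ_b K̄(u)_b^c M_b(u⁻¹)V` is
`∓ (u² − 1)/D` times `(𝔟𝐝 − 𝔡𝐞 + 1)V`: it is a ℂ-linear combination of `V`, `𝐝V`, `𝐞V`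
whose coefficients are read off from `K̄(u)`, so the boundary condition on `V` kills it. -/

section MopAction

variable {A H : Type*} [Ring A] [Algebra ℂ A] [AddCommGroup H] [Module ℂ H] [Module A H]
  [IsScalarTower ℂ A H]

theorem Mop_zero_smul (dd ee : A) (u : ℂ) (v : H) : Mop dd ee 0 u • v = u • v + ee • v := by
  simp [Mop, add_smul, algebraMap_smul]

theorem Mop_one_smul (dd ee : A) (u : ℂ) (v : H) : Mop dd ee 1 u • v = u⁻¹ • v + dd • v := by
  simp [Mop, add_smul, algebraMap_smul]

end MopAction

section KbentDefect

variable {M : Type*} [AddCommGroup M] [Module ℂ M] {fb fd u : ℂ}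

theorem Kbent_zero_defect (hu : u ≠ 0) (hden : fb * u ^ 2 - u - fd ≠ 0) (x y v : M) :
    u • v + y - (Kbent fb fd u 0 0 • (u⁻¹ • v + y) + Kbent fb fd u 1 0 • (u • v + x)) =
      (-((u ^ 2 - 1) / (fb * u ^ 2 - u - fd))) • (fb • x - fd • y + v) := by
  simp only [Kbent, Fin.isValue, and_self, if_true, one_ne_zero, and_true, if_false, zero_ne_one,
    and_false]
  generalize hD : fb * u ^ 2 - u - fd = D at *
  match_scalars <;> field_simp <;> (subst hD; ring)

theorem Kbent_one_defect (hu : u ≠ 0) (hden : fb * u ^ 2 - u - fd ≠ 0) (x y v : M) :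
    u⁻¹ • v + x - (Kbent fb fd u 0 1 • (u⁻¹ • v + y) + Kbent fb fd u 1 1 • (u • v + x)) =
      ((u ^ 2 - 1) / (fb * u ^ 2 - u - fd)) • (fb • x - fd • y + v) := by
  simp only [Kbent, Fin.isValue, and_self, if_true, one_ne_zero, and_true, if_false, zero_ne_one,
    and_false]
  generalize hD : fb * u ^ 2 - u - fd = D at *
  match_scalars <;> field_simp <;> (subst hD; ring)

end KbentDefect

theorem unfused_GZ_second_general {A : Type*} [Ring A] [Algebra ℂ A]
    {H : Type*} [AddCommGroup H] [Module ℂ H] [Module A H]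
    [IsScalarTower ℂ A H]
    (fb fd : ℂ) (dd ee : A)
    (V : H)
    (hV : (fb • dd - fd • ee + 1) • V = (0 : H))
    (u : ℂ) (hu : u ≠ 0) (hden : fb * u ^ 2 - u - fd ≠ 0) (c : Fin 2) :
    Mop dd ee c u • V =
      ∑ b : Fin 2, Kbent fb fd u b c • (Mop dd ee b u⁻¹ • V) := by
  have hboundary : fb • dd • V - fd • ee • V + V = 0 := by
    simpa only [add_smul, sub_smul, one_smul, smul_assoc] using hV
  rw [Fin.sum_univ_two, Mop_zero_smul, Mop_one_smul, inv_inv, ← sub_eq_zero]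
  fin_cases c
  · rw [Fin.zero_eta, Mop_zero_smul, Kbent_zero_defect hu hden, hboundary, smul_zero]
  · rw [Fin.mk_one, Mop_one_smul, Kbent_one_defect hu hden, hboundary, smul_zero]

/-- **Unfused second Ghoshal–Zamolodchikov relation**: if `𝐝𝐞 − q𝐞𝐝 = (1−q)·1` and
`(𝔟𝐝 − 𝔡𝐞 + 1)·V = 0` in a left `A`-module `H` (with ℂ-bilinear action), then for all
`u ≠ 0` with `𝔟u² − u − 𝔡 ≠ 0`, `M_c(u)·V = Σ_b K̄(u)_b^c M_b(u⁻¹)·V`. -/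
theorem unfused_GZ_second {A : Type*} [Ring A] [Algebra ℂ A]
    {H : Type*} [AddCommGroup H] [Module ℂ H] [Module A H]
    [IsScalarTower ℂ A H] [SMulCommClass ℂ A H]
    (q fb fd : ℂ) (dd ee : A)
    (hde : dd * ee - q • (ee * dd) = (1 - q) • (1 : A))
    (V : H)
    (hV : (fb • dd - fd • ee + 1) • V = (0 : H))
    (u : ℂ) (hu : u ≠ 0) (hden : fb * u ^ 2 - u - fd ≠ 0) (c : Fin 2) :
    Mop dd ee c u • V =
      ∑ b : Fin 2, Kbent fb fd u b c • (Mop dd ee b u⁻¹ • V) :=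
  unfused_GZ_second_general fb fd dd ee V hV u hu hden c
end

section
/- (Braided form of the fused bulk operator.) Let I ≥ 1 be an integer and let q, u ∈ ℂ with u·q^m ≠ 1 for every integer m with −I ≤ m ≤ I. Let P_{I,I} := P_ω ∈ End((ℂ²)^{⊗2I}) for the permutation ω of {1,…,2I} with ω(i) = i + I for 1 ≤ i ≤ I and ω(i) = i − I for I+1 ≤ i ≤ 2I. Then P_{I,I} ∘ R̊^I(u) = ∏_{a = I,…,1} ∏_{b = a,…,a+I−1} Ř(u q^{b+1−2a})_b, where the outer product over a is taken left to right in decreasing order and the inner product over b is taken left to right in increasing order. -/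
open scoped Matrix ComplexOrder

/-- The permutation of `{1,…,2I}` with `ω(i) = i + I` for `i ≤ I` and `ω(i) = i − I` for
`i > I` (0-based version). -/
noncomputable def swapHalvesPerm (I : ℕ) : Equiv.Perm (Fin (2 * I)) :=
  (finCongr (by omega : 2 * I = I + I)).trans
    ((finAddFlip : Fin (I + I) ≃ Fin (I + I)).trans (finCongr (by omega)))

/-!
Since `Ř(v) = P ∘ R(v)`, each factor `Ř(v)_b` is the transposition of the sites `b, b + 1`
followed by `R(v)_{b,b+1}`. Pushing all transpositions to the far left conjugates every
`R`-factor by a permutation, which merely relabels its two sites. In the row of a fixed `a` the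
transpositions compose to the cycle `a → a + 1 → ⋯ → a + I → a`, which moves the second site of
every factor to `a + I`; the row cycles compose to the rotation `P_{I,I}`, which moves the first
sites `a, …, a + I - 1` back to `1, …, I`. The relabelled factors are those of `R̊^I(u)`.
-/

lemma List.map_finRange_eq_map_range {α : Type*} {m : ℕ} {f : Fin m → α} {g : ℕ → α}
    (h : ∀ a : Fin m, f a = g a) : (List.finRange m).map f = (List.range m).map g := by
  rw [← List.map_coe_finRange_eq_range, List.map_map]
  exact List.map_congr_left fun a _ => h a

lemma List.map_finRange_eq_map_reverse_range {α : Type*} {m : ℕ} {f : Fin m → α} {g : ℕ → α}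
    (h : ∀ a : Fin m, f a = g (m - 1 - a)) :
    (List.finRange m).map f = (List.range m).reverse.map g := by
  rw [List.range_eq_range', List.reverse_range', List.map_map]
  exact List.map_finRange_eq_map_range fun a => by simpa using h a

abbrev TwoSiteOp := Matrix (Fin 2 × Fin 2) (Fin 2 × Fin 2) ℂ

section TwoSiteOperators

variable {n : ℕ}

lemma permMat_eq_toMatrix (σ : Equiv.Perm (Fin n)) :
    permMat n σ = (σ⁻¹.arrowCongr (Equiv.refl (Fin 2))).toPEquiv.toMatrix := by
  ext x y
  simp only [permMat, PEquiv.toMatrix_apply, Equiv.toPEquiv_apply, Option.mem_def,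
    Option.some.injEq]
  rfl

lemma permMat_one : permMat n 1 = 1 := by
  ext x y
  exact if_congr Iff.rfl rfl rfl

lemma permMat_mul (σ τ : Equiv.Perm (Fin n)) :
    permMat n (σ * τ) = permMat n σ * permMat n τ := by
  rw [permMat_eq_toMatrix, permMat_eq_toMatrix, permMat_eq_toMatrix, ← PEquiv.toMatrix_trans,
    ← Equiv.toPEquiv_trans]
  rfl

lemma emb2_mul_permMat (i j : Fin n) (σ : Equiv.Perm (Fin n)) (T : TwoSiteOp) :
    emb2 i j T * permMat n σ = permMat n σ * emb2 (σ⁻¹ i) (σ⁻¹ j) T := by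
  rw [permMat_eq_toMatrix, PEquiv.mul_toMatrix_toPEquiv, PEquiv.toMatrix_toPEquiv_mul]
  ext x y
  simp only [Matrix.submatrix_apply, id, emb2, Equiv.arrowCongr_apply, Equiv.arrowCongr_symm,
    Equiv.coe_refl, Function.comp_apply, Equiv.symm_symm, Equiv.refl_symm,
    Equiv.symm_apply_apply]
  refine congrArg _ (if_congr ?_ rfl rfl)
  rw [(σ⁻¹).forall_congr_left]
  simp only [ne_eq, Equiv.symm_apply_eq, Equiv.apply_symm_apply]

lemma sum_mul_ite_eqOff_pair {i j : Fin n} (hij : i ≠ j) (x : Fin n → Fin 2)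
    (G : Fin 2 × Fin 2 → ℂ) :
    ∑ z : Fin n → Fin 2, G (z i, z j) * (if ∀ k, k ≠ i → k ≠ j → x k = z k then 1 else 0) =
      ∑ p : Fin 2 × Fin 2, G p := by
  simp_rw [mul_boole]
  rw [← Finset.sum_filter]
  refine Finset.sum_nbij' (fun z => (z i, z j))
    (fun p => Function.update (Function.update x i p.1) j p.2) (by simp) ?_ ?_ ?_ (by simp)
  · intro p _
    simp only [Finset.mem_filter, Finset.mem_univ, true_and]
    intro k hki hkj
    rw [Function.update_of_ne hkj, Function.update_of_ne hki]
  · intro z hz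
    replace hz := (Finset.mem_filter.mp hz).2
    funext k
    by_cases hkj : k = j
    · subst hkj; rw [Function.update_self]
    by_cases hki : k = i
    · subst hki; rw [Function.update_of_ne hkj, Function.update_self]
    rw [Function.update_of_ne hkj, Function.update_of_ne hki, hz k hki hkj]
  · intro p _
    simp [Function.update_of_ne hij]

lemma emb2_mul {i j : Fin n} (hij : i ≠ j) (S T : TwoSiteOp) :
    emb2 i j (S * T) = emb2 i j S * emb2 i j T := by
  ext x y
  have factor : ∀ z : Fin n → Fin 2,
      S (x i, x j) (z i, z j) * (if ∀ k, k ≠ i → k ≠ j → x k = z k then 1 else 0) *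
        (T (z i, z j) (y i, y j) * (if ∀ k, k ≠ i → k ≠ j → z k = y k then 1 else 0)) =
      S (x i, x j) (z i, z j) * T (z i, z j) (y i, y j) *
        (if ∀ k, k ≠ i → k ≠ j → x k = y k then 1 else 0) *
        (if ∀ k, k ≠ i → k ≠ j → x k = z k then 1 else 0) := by
    intro z
    by_cases hxz : ∀ k, k ≠ i → k ≠ j → x k = z k
    · have hzy : (∀ k, k ≠ i → k ≠ j → z k = y k) ↔ ∀ k, k ≠ i → k ≠ j → x k = y k :=
        forall₃_congr fun k hki hkj => by rw [hxz k hki hkj]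
      rw [if_congr hzy rfl rfl]; ring
    · simp [hxz]
  simp only [emb2, Matrix.mul_apply]
  rw [Finset.sum_congr rfl fun z _ => factor z, sum_mul_ite_eqOff_pair hij x
    (fun p => S (x i, x j) p * T p (y i, y j) *
      (if ∀ k, k ≠ i → k ≠ j → x k = y k then 1 else 0)), Finset.sum_mul]

lemma emb2_swapMat {i j : Fin n} (hij : i ≠ j) : emb2 i j swapMat = permMat n (Equiv.swap i j) := by
  ext x y
  simp only [emb2, swapMat, permMat, boole_mul, ← ite_and]
  refine if_congr ⟨fun ⟨⟨hj, hi⟩, hk⟩ => funext fun k => ?_, fun h => ⟨⟨?_, ?_⟩, ?_⟩⟩ rfl rfl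
  · rcases eq_or_ne k i with rfl | hki
    · rwa [Equiv.swap_apply_left]
    rcases eq_or_ne k j with rfl | hkj
    · rwa [Equiv.swap_apply_right]
    rw [Equiv.swap_apply_of_ne_of_ne hki hkj, hk k hki hkj]
  · simpa using congrFun h j
  · simpa using congrFun h i
  · intro k hki hkj
    simpa [Equiv.swap_apply_of_ne_of_ne hki hkj] using congrFun h k

lemma emb2_swapMat_mul {i j : Fin n} (hij : i ≠ j) (T : TwoSiteOp) :
    emb2 i j (swapMat * T) = permMat n (Equiv.swap i j) * emb2 i j T := by
  rw [emb2_mul hij, emb2_swapMat hij]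

/-- Out of range, `emb2Nat` is `1` and `natApply σ` is the identity; these junk values make the
conjugation rule `emb2Nat_mul_permMat` hold unconditionally. -/
def emb2Nat (n i j : ℕ) (T : TwoSiteOp) :
    Matrix (Fin n → Fin 2) (Fin n → Fin 2) ℂ :=
  if h : i < n ∧ j < n then emb2 ⟨i, h.1⟩ ⟨j, h.2⟩ T else 1

def natApply (σ : Equiv.Perm (Fin n)) (i : ℕ) : ℕ :=
  if h : i < n then σ ⟨i, h⟩ else i

def swapNat (n i j : ℕ) : Equiv.Perm (Fin n) :=
  if h : i < n ∧ j < n then Equiv.swap ⟨i, h.1⟩ ⟨j, h.2⟩ else 1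

lemma natApply_of_lt (σ : Equiv.Perm (Fin n)) {i : ℕ} (h : i < n) :
    natApply σ i = σ ⟨i, h⟩ :=
  dif_pos h

lemma natApply_lt (σ : Equiv.Perm (Fin n)) {i : ℕ} (h : i < n) : natApply σ i < n := by
  rw [natApply_of_lt σ h]
  exact Fin.is_lt _

lemma natApply_one (i : ℕ) : natApply (1 : Equiv.Perm (Fin n)) i = i := by
  unfold natApply
  split_ifs <;> rfl

lemma natApply_mul (σ τ : Equiv.Perm (Fin n)) (i : ℕ) :
    natApply (σ * τ) i = natApply σ (natApply τ i) := by
  by_cases h : i < n <;> simp [natApply, h]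

lemma natApply_inv_of_natApply_eq (σ : Equiv.Perm (Fin n)) {x y : ℕ} (hy : y < n)
    (h : natApply σ y = x) : natApply σ⁻¹ x = y := by
  subst h
  rw [natApply_of_lt σ hy, natApply_of_lt _ (Fin.is_lt _)]
  simp

lemma natApply_swapNat {i j : ℕ} (hi : i < n) (hj : j < n) (k : ℕ) :
    natApply (swapNat n i j) k = if k = i then j else if k = j then i else k := by
  by_cases hk : k < n
  · rw [swapNat, dif_pos ⟨hi, hj⟩, natApply_of_lt _ hk, Equiv.swap_apply_def]
    simp only [Fin.mk.injEq]
    split_ifs <;> rfl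
  · rw [natApply, dif_neg hk, if_neg (by omega), if_neg (by omega)]

lemma emb2_eq_emb2Nat {i j : ℕ} (hi : i < n) (hj : j < n) (T : TwoSiteOp) :
    emb2 (⟨i, hi⟩ : Fin n) ⟨j, hj⟩ T = emb2Nat n i j T := by
  rw [emb2Nat, dif_pos ⟨hi, hj⟩]

lemma emb2Nat_mul_permMat (i j : ℕ) (σ : Equiv.Perm (Fin n)) (T : TwoSiteOp) :
    emb2Nat n i j T * permMat n σ =
      permMat n σ * emb2Nat n (natApply σ⁻¹ i) (natApply σ⁻¹ j) T := by
  by_cases h : i < n ∧ j < n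
  · rw [emb2Nat, dif_pos h, emb2_mul_permMat, ← emb2_eq_emb2Nat (natApply_lt _ h.1)
      (natApply_lt _ h.2)]
    congr 3 <;> exact Fin.ext (natApply_of_lt _ _).symm
  · have h' : ¬(natApply σ⁻¹ i < n ∧ natApply σ⁻¹ j < n) := by
      unfold natApply
      split_ifs <;> omega
    rw [emb2Nat, dif_neg h, emb2Nat, dif_neg h', one_mul, mul_one]

lemma list_prod_emb2Nat_mul_permMat {ι : Type*} (l : List ι) (f g : ι → ℕ)
    (T : ι → TwoSiteOp) (σ : Equiv.Perm (Fin n)) :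
    (l.map fun b => emb2Nat n (f b) (g b) (T b)).prod * permMat n σ =
      permMat n σ *
        (l.map fun b => emb2Nat n (natApply σ⁻¹ (f b)) (natApply σ⁻¹ (g b)) (T b)).prod := by
  induction l with
  | nil => simp
  | cons b l ih =>
    simp only [List.map_cons, List.prod_cons]
    rw [mul_assoc, ih, ← mul_assoc, emb2Nat_mul_permMat, mul_assoc]

lemma emb2Nat_swapMat_mul {s : ℕ} (hs : s + 1 < n) (T : TwoSiteOp) :
    emb2Nat n s (s + 1) (swapMat * T) =
      permMat n (swapNat n s (s + 1)) * emb2Nat n s (s + 1) T := by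
  have hne : (⟨s, by omega⟩ : Fin n) ≠ ⟨s + 1, hs⟩ := by simp
  rw [emb2Nat, dif_pos ⟨by omega, hs⟩, emb2Nat, dif_pos ⟨by omega, hs⟩, emb2_swapMat_mul hne,
    swapNat, dif_pos ⟨by omega, hs⟩]

def shiftCycle (n c : ℕ) : ℕ → Equiv.Perm (Fin n)
  | 0 => 1
  | m + 1 => shiftCycle n c m * swapNat n (c + m) (c + m + 1)

lemma natApply_shiftCycle {c m : ℕ} (h : c + m < n) (k : ℕ) :
    natApply (shiftCycle n c m) k =
      if k < c then k else if k < c + m then k + 1 else if k = c + m then c else k := by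
  induction m generalizing k with
  | zero => rw [shiftCycle, natApply_one]; split_ifs <;> omega
  | succ m ih =>
    rw [shiftCycle, natApply_mul, natApply_swapNat (by omega) (by omega)]
    split_ifs <;> rw [ih (by omega)] <;> split_ifs <;> omega

def prefixRotation (n I : ℕ) : ℕ → Equiv.Perm (Fin n)
  | 0 => 1
  | d + 1 => shiftCycle n d I * prefixRotation n I d

lemma natApply_prefixRotation {I d : ℕ} (h : I + d ≤ n) (k : ℕ) :
    natApply (prefixRotation n I d) k =
      if k < I then k + d else if k < I + d then k - I else k := by
  induction d generalizing k with
  | zero => rw [prefixRotation, natApply_one]; split_ifs <;> omega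
  | succ d ih =>
    rw [prefixRotation, natApply_mul, ih (by omega), natApply_shiftCycle (by omega)]
    split_ifs <;> omega

lemma swapHalvesPerm_apply_val (I : ℕ) (k : Fin (2 * I)) :
    (swapHalvesPerm I k : ℕ) = if (k : ℕ) < I then k + I else k - I := by
  obtain ⟨k, hk⟩ := k
  have hcast : Fin.cast (two_mul I) ⟨k, hk⟩ = ⟨k, by omega⟩ := rfl
  simp only [swapHalvesPerm, Equiv.trans_apply, finCongr_apply, Fin.val_cast, hcast]
  split_ifs with hkI
  · rw [finAddFlip_apply_mk_left hkI]
    exact add_comm I k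
  · rw [finAddFlip_apply_mk_right (by omega) (by omega)]

lemma prefixRotation_self_eq_swapHalvesPerm (I : ℕ) :
    prefixRotation (2 * I) I I = swapHalvesPerm I := by
  ext k
  rw [← natApply_of_lt _ k.is_lt, natApply_prefixRotation (by omega), swapHalvesPerm_apply_val]
  split_ifs <;> omega

lemma prod_range_emb2Nat_swapMat_mul {c m : ℕ} (h : c + m < n) (T : ℕ → TwoSiteOp) :
    ((List.range m).map fun b => emb2Nat n (c + b) (c + b + 1) (swapMat * T b)).prod =
      permMat n (shiftCycle n c m) *
        ((List.range m).map fun b => emb2Nat n (c + b) (c + m) (T b)).prod := by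
  induction m with
  | zero => simp [shiftCycle, permMat_one]
  | succ m ih =>
    have hswap : ∀ b ∈ List.range m,
        natApply (swapNat n (c + m) (c + m + 1))⁻¹ (c + b) = c + b ∧
          natApply (swapNat n (c + m) (c + m + 1))⁻¹ (c + m) = c + m + 1 := by
      intro b hb
      rw [List.mem_range] at hb
      refine ⟨natApply_inv_of_natApply_eq _ (by omega) ?_,
        natApply_inv_of_natApply_eq _ (by omega) ?_⟩ <;>
      · rw [natApply_swapNat (by omega) (by omega)]
        split_ifs <;> omega
    simp only [List.range_succ, List.map_append, List.prod_append, List.map_singleton,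
      List.prod_singleton]
    rw [ih (by omega), emb2Nat_swapMat_mul (by omega), mul_assoc, ← mul_assoc _ (permMat _ _),
      list_prod_emb2Nat_mul_permMat, List.map_congr_left fun b hb => by
        rw [(hswap b hb).1, (hswap b hb).2], shiftCycle, permMat_mul, ← add_assoc]
    simp only [mul_assoc]

lemma prod_permMat_shiftCycle_mul {I d : ℕ} (h : I + d ≤ n) (T : ℕ → ℕ → TwoSiteOp) :
    ((List.range d).reverse.map fun k => permMat n (shiftCycle n k I) *
        ((List.range I).map fun b => emb2Nat n (k + b) (k + I) (T k b)).prod).prod =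
      permMat n (prefixRotation n I d) *
        ((List.range d).reverse.map fun k =>
          ((List.range I).map fun b => emb2Nat n b (k + I) (T k b)).prod).prod := by
  induction d with
  | zero => simp [prefixRotation, permMat_one]
  | succ d ih =>
    have hrot : ∀ b ∈ List.range I,
        natApply (prefixRotation n I d)⁻¹ (d + b) = b ∧
          natApply (prefixRotation n I d)⁻¹ (d + I) = d + I := by
      intro b hb
      rw [List.mem_range] at hb
      refine ⟨natApply_inv_of_natApply_eq _ (by omega) ?_,
        natApply_inv_of_natApply_eq _ (by omega) ?_⟩ <;>
      · rw [natApply_prefixRotation (by omega)]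
        split_ifs <;> omega
    simp only [List.range_succ, List.reverse_append, List.reverse_singleton, List.singleton_append,
      List.map_cons, List.prod_cons]
    rw [ih (by omega), mul_assoc, ← mul_assoc _ (permMat _ _), list_prod_emb2Nat_mul_permMat,
      List.map_congr_left fun b hb => by rw [(hrot b hb).1, (hrot b hb).2], prefixRotation,
      permMat_mul]
    simp only [mul_assoc]

lemma prod_prod_emb2Nat_swapMat_mul (I : ℕ) (T : ℕ → ℕ → TwoSiteOp) :
    ((List.range I).reverse.map fun k => ((List.range I).map fun b =>
        emb2Nat (2 * I) (k + b) (k + b + 1) (swapMat * T k b)).prod).prod =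
      permMat (2 * I) (swapHalvesPerm I) *
        ((List.range I).reverse.map fun k =>
          ((List.range I).map fun b => emb2Nat (2 * I) b (k + I) (T k b)).prod).prod := by
  rw [← prefixRotation_self_eq_swapHalvesPerm, ← prod_permMat_shiftCycle_mul (by omega)]
  refine congrArg List.prod (List.map_congr_left fun k hk => ?_)
  rw [List.mem_reverse, List.mem_range] at hk
  exact prod_range_emb2Nat_swapMat_mul (by omega) (T k)

end TwoSiteOperators

lemma Rring_eq_prod_emb2Nat (I : ℕ) (q u : ℂ) :
    Rring I q u = ((List.range I).reverse.map fun k => ((List.range I).map fun b =>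
      emb2Nat (2 * I) b (k + I) (Rmat q (u * q ^ ((b : ℤ) - k)))).prod).prod := by
  refine congrArg List.prod (List.map_finRange_eq_map_reverse_range fun a => ?_)
  refine congrArg List.prod (List.map_finRange_eq_map_range fun b => ?_)
  have := a.is_lt
  have hexp : ((b : ℤ) + 1 - ((I : ℤ) - a)) = b - ((I - 1 - a : ℕ) : ℤ) := by omega
  rw [emb2_eq_emb2Nat, hexp]
  congr 1
  omega

/-- **Braided form of the fused bulk operator**:
`P_{I,I} ∘ R̊^I(u) = ∏_{a=I,…,1} ∏_{b=a,…,a+I−1} Ř(u q^{b+1−2a})_b`, the outer product over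
`a` in decreasing order, the inner product over `b` in increasing order (here `a = I − a'`,
`b = a + b'`, and `Ř(v)_b` acts on the `b`-th and `(b+1)`-th tensor factors, 1-based). -/
theorem braided_fused_R (I : ℕ) (q u : ℂ) :
    permMat (2 * I) (swapHalvesPerm I) * Rring I q u =
      ((List.finRange I).map (fun a' =>
        ((List.finRange I).map (fun b' =>
          emb2 (⟨I - a'.1 - 1 + b'.1, by have := a'.isLt; have := b'.isLt; omega⟩ : Fin (2 * I))
            ⟨I - a'.1 + b'.1, by have := a'.isLt; have := b'.isLt; omega⟩
            (RcheckMat q (u * q ^ (((b'.1 : ℤ) + 1) - ((I : ℤ) - (a'.1 : ℤ))))))).prod)).prod := by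
  rw [Rring_eq_prod_emb2Nat, ← prod_prod_emb2Nat_swapMat_mul]
  refine congrArg List.prod (List.map_finRange_eq_map_reverse_range fun a => ?_).symm
  refine congrArg List.prod (List.map_finRange_eq_map_range fun b => ?_)
  have := a.is_lt
  have hexp : ((b : ℤ) + 1 - ((I : ℤ) - a)) = b - ((I - 1 - a : ℕ) : ℤ) := by omega
  rw [emb2_eq_emb2Nat, RcheckMat, hexp]
  congr 1 <;> omega
end

section
/- (Stochasticity, conservation and positivity of the fused bulk vertex weights.) Let I ≥ 1 be an integer, 0 < q < 1, and 0 < κ < q^{(I−1)/2}. For 0 ≤ a, b, c, d ≤ I define 𝚁_{a,b}^{c,d} := R^I(κ²)_{b,a}^{d,c} (note κ²·q^{b−a} ∈ (0,1) for all 1 ≤ a, b ≤ I, so R̊^I(κ²) is well defined). Then: (i) 𝚁_{a,b}^{c,d} = 0 whenever a + b ≠ c + d; (ii) 𝚁_{a,b}^{c,d} is real and strictly positive whenever a + b = c + d; (iii) Σ_{c,d=0}^{I} 𝚁_{a,b}^{c,d} = 1 for all 0 ≤ a, b ≤ I. -/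
open scoped Matrix ComplexOrder

/-!
Each factor `R(u q^{b-a})_{b,a+I}` of `R̊^I(κ²)` has spectral parameter in `(0, 1)` (this is what
`κ < q^{(I-1)/2}` buys), so it is column-stochastic, conserves the particle number, and is strictly
positive on every particle-conserving transition. The first two properties pass to the product and
survive `Π ⊗ Π` and `Π̂ ⊗ Π̂`, which gives (i) and (iii). For (ii), a product of nonnegative matrices
with positive diagonal has a positive entry as soon as some chain of factors does: every factor can
either act trivially or swap its two sites, and carrying the `|d - b|` surplus particles across the
two halves one swap at a time produces such a chain.
-/

open Matrix

section NonnegMatrix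

variable {l m n R : Type*} [Fintype m]

lemma Matrix.mul_apply_pos [CommSemiring R] [PartialOrder R] [IsStrictOrderedRing R]
    {A : Matrix l m R} {B : Matrix m n R}
    (hA : ∀ i k, 0 ≤ A i k) (hB : ∀ k j, 0 ≤ B k j) {i : l} {k : m} {j : n}
    (hAik : 0 < A i k) (hBkj : 0 < B k j) : 0 < (A * B) i j :=
  Finset.sum_pos' (fun k' _ => mul_nonneg (hA i k') (hB k' j))
    ⟨k, Finset.mem_univ k, mul_pos hAik hBkj⟩

def Matrix.Conserves {β : Type*} [Zero R] (f : l → β) (g : n → β) (M : Matrix l n R) : Prop :=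
  ∀ i j, M i j ≠ 0 → f i = g j

lemma Matrix.Conserves.mul {β : Type*} [NonUnitalNonAssocSemiring R]
    {f : l → β} {g : m → β} {h : n → β} {A : Matrix l m R} {B : Matrix m n R}
    (hA : A.Conserves f g) (hB : B.Conserves g h) : (A * B).Conserves f h := by
  intro i j hij
  obtain ⟨k, -, hk⟩ := Finset.exists_ne_zero_of_sum_ne_zero hij
  exact (hA i k (left_ne_zero_of_mul hk)).trans (hB k j (right_ne_zero_of_mul hk))

variable [Fintype n] [DecidableEq n]

def Matrix.conservingSubmonoid (R : Type*) [Semiring R] {β : Type*} (f : n → β) :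
    Submonoid (Matrix n n R) where
  carrier := {M | M.Conserves f f}
  mul_mem' hA hB := Matrix.Conserves.mul hA hB
  one_mem' _ _ h := congrArg f (not_not.1 fun hij => h (one_apply_ne hij))

def Matrix.nonnegPosDiag (n R : Type*) [Fintype n] [DecidableEq n] [CommSemiring R]
    [PartialOrder R] [IsStrictOrderedRing R] : Submonoid (Matrix n n R) where
  carrier := {M | (∀ i j, 0 ≤ M i j) ∧ ∀ i, 0 < M i i}
  mul_mem' hA hB :=
    ⟨fun i j => Finset.sum_nonneg fun k _ => mul_nonneg (hA.1 i k) (hB.1 k j),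
      fun i => mul_apply_pos hA.1 hB.1 (hA.2 i) (hB.2 i)⟩
  one_mem' := ⟨fun _ _ => by rw [one_apply]; split_ifs <;> simp, fun _ => by simp⟩

variable [CommSemiring R] [PartialOrder R] [IsStrictOrderedRing R]

lemma Matrix.list_prod_apply_pos_of_mem {L : List (Matrix n n R)}
    (hL : ∀ M ∈ L, M ∈ nonnegPosDiag n R) {M : Matrix n n R} (hM : M ∈ L) {i j : n}
    (h : 0 < M i j) : 0 < L.prod i j := by
  obtain ⟨L₁, L₂, rfl⟩ := List.append_of_mem hM
  have h₁ : L₁.prod ∈ nonnegPosDiag n R := Submonoid.list_prod_mem _ fun N hN => hL N (by simp [hN])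
  have h₂ : L₂.prod ∈ nonnegPosDiag n R := Submonoid.list_prod_mem _ fun N hN => hL N (by simp [hN])
  have hM' : M ∈ nonnegPosDiag n R := hL M (by simp)
  rw [List.prod_append, List.prod_cons, ← mul_assoc]
  exact mul_apply_pos (mul_mem h₁ hM').1 h₂.1 (mul_apply_pos h₁.1 hM'.1 (h₁.2 i) h) (h₂.2 j)

lemma Matrix.ofFn_prod_apply_pos {k : ℕ} (P : Fin k → Matrix n n R)
    (hP : ∀ t, P t ∈ nonnegPosDiag n R) (z : Fin (k + 1) → n)
    (hz : ∀ t : Fin k, 0 < P t (z t.castSucc) (z t.succ)) :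
    0 < (List.ofFn P).prod (z 0) (z (Fin.last k)) := by
  induction k with
  | zero => simp
  | succ k ih =>
    rw [List.ofFn_succ, List.prod_cons]
    have hrest :=
      ih (fun t => P t.succ) (fun t => hP t.succ) (fun t => z t.succ) (fun t => hz t.succ)
    have hprod : (List.ofFn fun t => P t.succ).prod ∈ nonnegPosDiag n R :=
      Submonoid.list_prod_mem _ fun N hN => by
        obtain ⟨t, rfl⟩ := List.mem_ofFn.1 hN
        exact hP t.succ
    exact mul_apply_pos (hP 0).1 hprod.1 (hz 0) hrest

end NonnegMatrix

section TwoSite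

variable {n : ℕ}

def tot (x : Fin n → Fin 2) : ℕ := ∑ k, (x k : ℕ)

lemma tot_eq_add_add_sum_erase {i j : Fin n} (hij : i ≠ j) (x : Fin n → Fin 2) :
    tot x = x i + x j + ∑ k ∈ (Finset.univ.erase i).erase j, (x k : ℕ) := by
  rw [tot, ← Finset.add_sum_erase _ _ (Finset.mem_univ i),
    ← Finset.add_sum_erase _ _ (Finset.mem_erase.2 ⟨hij.symm, Finset.mem_univ j⟩), add_assoc]

variable (i j : Fin n) (T : Matrix (Fin 2 × Fin 2) (Fin 2 × Fin 2) ℂ)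

lemma emb2_apply (x y : Fin n → Fin 2) : emb2 i j T x y =
    if ∀ k, k ≠ i → k ≠ j → x k = y k then T (x i, x j) (y i, y j) else 0 := by
  rw [emb2]; split_ifs <;> simp

lemma emb2_apply_comp_swap (x : Fin n → Fin 2) :
    emb2 i j T (x ∘ Equiv.swap i j) x = T (x j, x i) (x i, x j) := by
  rw [emb2_apply, if_pos fun k hki hkj => by simp [Equiv.swap_apply_of_ne_of_ne hki hkj]]
  simp

variable {i j T}

lemma emb2_sum_col (hij : i ≠ j) (y : Fin n → Fin 2) :
    ∑ x, emb2 i j T x y = ∑ p, T p (y i, y j) := by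
  simp only [emb2_apply]
  rw [Finset.sum_ite, Finset.sum_const_zero, add_zero]
  refine Finset.sum_nbij' (fun x => (x i, x j))
    (fun p => Function.update (Function.update y i p.1) j p.2) (by simp) ?_ ?_ ?_ (by simp)
  · intro p _
    refine Finset.mem_filter.2 ⟨Finset.mem_univ _, fun k hki hkj => ?_⟩
    rw [Function.update_of_ne hkj, Function.update_of_ne hki]
  · intro x hx
    replace hx : ∀ k, k ≠ i → k ≠ j → x k = y k := by simpa using hx
    funext k
    by_cases hkj : k = j
    · subst hkj; simp
    by_cases hki : k = i
    · subst hki; simp [hkj]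
    simp [Function.update_of_ne hkj, Function.update_of_ne hki, hx k hki hkj]
  · intro p _
    simp [Function.update_of_ne hij]

lemma emb2_mem_colStochastic (hij : i ≠ j) (hT : T ∈ colStochastic ℂ (Fin 2 × Fin 2)) :
    emb2 i j T ∈ colStochastic ℂ (Fin n → Fin 2) := by
  rw [mem_colStochastic_iff_sum] at hT ⊢
  refine ⟨fun x y => ?_, fun y => by rw [emb2_sum_col hij, hT.2]⟩
  rw [emb2_apply]
  split_ifs
  exacts [hT.1 _ _, le_rfl]

lemma emb2_mem_nonnegPosDiag (hT : T ∈ nonnegPosDiag (Fin 2 × Fin 2) ℂ) :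
    emb2 i j T ∈ nonnegPosDiag (Fin n → Fin 2) ℂ := by
  refine ⟨fun x y => ?_, fun x => ?_⟩
  · rw [emb2_apply]
    split_ifs
    exacts [hT.1 _ _, le_rfl]
  · rw [emb2_apply, if_pos fun _ _ _ => rfl]
    exact hT.2 _

lemma emb2_mem_conservingSubmonoid (hij : i ≠ j)
    (hT : T ∈ conservingSubmonoid ℂ fun p : Fin 2 × Fin 2 => (p.1 : ℕ) + p.2) :
    emb2 i j T ∈ conservingSubmonoid ℂ (tot (n := n)) := by
  intro x y hxy
  rw [emb2_apply] at hxy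
  split_ifs at hxy with hoff
  · rw [tot_eq_add_add_sum_erase hij, tot_eq_add_add_sum_erase hij]
    congr 1
    · exact hT _ _ hxy
    refine Finset.sum_congr rfl fun k hk => ?_
    simp only [Finset.mem_erase] at hk
    rw [hoff k hk.2.1 hk.1]
  · exact absurd rfl hxy

end TwoSite

section RMatrix

lemma Rmat_apply_eq_zero (q u : ℂ) {a b c d : Fin 2} (h : (a : ℕ) + b ≠ c + d) :
    Rmat q u (c, d) (a, b) = 0 := by
  fin_cases a <;> fin_cases b <;> fin_cases c <;> fin_cases d <;> simp_all [Rmat, Rent]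

lemma Rmat_mem_conservingSubmonoid (q u : ℂ) :
    Rmat q u ∈ conservingSubmonoid ℂ fun p : Fin 2 × Fin 2 => (p.1 : ℕ) + p.2 :=
  fun _ _ h => by_contra fun hne => h (Rmat_apply_eq_zero q u (Ne.symm hne))

lemma Rmat_sum_col {q u : ℂ} (h : 1 - q * u ≠ 0) (p : Fin 2 × Fin 2) :
    ∑ r, Rmat q u r p = 1 := by
  obtain ⟨a, b⟩ := p
  simp only [Fintype.sum_prod_type, Fin.sum_univ_two]
  fin_cases a <;> fin_cases b <;> simp [Rmat, Rent] <;>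
    rw [← add_div, div_eq_one_iff_eq h] <;> ring

variable {q u : ℝ}

lemma Rmat_apply_pos (hq0 : 0 < q) (hq1 : q < 1) (hu0 : 0 < u) (hu1 : u < 1) {a b c d : Fin 2}
    (h : (a : ℕ) + b = c + d) :
    0 < Rmat (q : ℂ) (u : ℂ) (c, d) (a, b) := by
  have hqu : 0 < 1 - q * u := by nlinarith
  fin_cases a <;> fin_cases b <;> fin_cases c <;> fin_cases d <;>
    simp_all [Rmat, Rent] <;> norm_cast <;> positivity

lemma Rmat_mem_colStochastic (hq0 : 0 < q) (hq1 : q < 1) (hu0 : 0 < u) (hu1 : u < 1) :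
    Rmat (q : ℂ) (u : ℂ) ∈ colStochastic ℂ (Fin 2 × Fin 2) := by
  refine mem_colStochastic_iff_sum.2 ⟨fun ⟨c, d⟩ ⟨a, b⟩ => ?_, Rmat_sum_col ?_⟩
  · by_cases h : (a : ℕ) + b = c + d
    · exact (Rmat_apply_pos hq0 hq1 hu0 hu1 h).le
    · exact (Rmat_apply_eq_zero _ _ h).ge
  · exact_mod_cast (show (1 : ℝ) - q * u ≠ 0 by nlinarith)

lemma Rmat_mem_nonnegPosDiag (hq0 : 0 < q) (hq1 : q < 1) (hu0 : 0 < u) (hu1 : u < 1) :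
    Rmat (q : ℂ) (u : ℂ) ∈ nonnegPosDiag (Fin 2 × Fin 2) ℂ :=
  ⟨(Rmat_mem_colStochastic hq0 hq1 hu0 hu1).1, fun _ => Rmat_apply_pos hq0 hq1 hu0 hu1 rfl⟩

end RMatrix

section Halves

variable {I : ℕ}

def leftSite (k : Fin I) : Fin (2 * I) := ⟨k, by omega⟩

def rightSite (k : Fin I) : Fin (2 * I) := ⟨k + I, by omega⟩

lemma leftSite_injective : Function.Injective (leftSite (I := I)) :=
  fun _ _ h => Fin.ext (Fin.mk.inj h)

lemma rightSite_injective : Function.Injective (rightSite (I := I)) :=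
  fun _ _ h => Fin.ext (by simpa [rightSite] using h)

lemma leftSite_ne_rightSite (k r : Fin I) : leftSite k ≠ rightSite r := by
  simp [leftSite, rightSite, Fin.ext_iff]; omega

lemma firstHalf_apply (x : Fin (2 * I) → Fin 2) (k : Fin I) : firstHalf x k = x (leftSite k) :=
  rfl

lemma secondHalf_apply (x : Fin (2 * I) → Fin 2) (k : Fin I) :
    secondHalf x k = x (rightSite k) :=
  rfl

variable (I) in
def halvesEquiv : (Fin (2 * I) → Fin 2) ≃ (Fin I → Fin 2) × (Fin I → Fin 2) where
  toFun x := (firstHalf x, secondHalf x)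
  invFun p k := if h : (k : ℕ) < I then p.1 ⟨k, h⟩ else p.2 ⟨k - I, by omega⟩
  left_inv x := by
    funext k
    by_cases h : (k : ℕ) < I
    · simp [h, firstHalf]
    · simp only [h, dite_false, secondHalf]
      congr 1
      exact Fin.ext (by simp; omega)
  right_inv p := by ext k <;> simp [firstHalf, secondHalf]

@[simp]
lemma firstHalf_halvesEquiv_symm (p : (Fin I → Fin 2) × (Fin I → Fin 2)) :
    firstHalf ((halvesEquiv I).symm p) = p.1 :=
  congrArg Prod.fst ((halvesEquiv I).apply_symm_apply p)

@[simp]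
lemma secondHalf_halvesEquiv_symm (p : (Fin I → Fin 2) × (Fin I → Fin 2)) :
    secondHalf ((halvesEquiv I).symm p) = p.2 :=
  congrArg Prod.snd ((halvesEquiv I).apply_symm_apply p)

lemma sum_firstHalf_mul_secondHalf {R : Type*} [CommSemiring R] (f g : (Fin I → Fin 2) → R) :
    ∑ x, f (firstHalf x) * g (secondHalf x) = (∑ x, f x) * ∑ x, g x := by
  rw [Finset.sum_mul_sum, ← Fintype.sum_prod_type', ← (halvesEquiv I).symm.sum_comp]
  simp

lemma tot_eq_tot_firstHalf_add_tot_secondHalf (x : Fin (2 * I) → Fin 2) :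
    tot x = tot (firstHalf x) + tot (secondHalf x) := by
  have h : I + I = 2 * I := by omega
  rw [tot, ← (finCongr h).sum_comp, Fin.sum_univ_add]
  congr 1
  refine Finset.sum_congr rfl fun k _ => ?_
  rw [secondHalf_apply]
  congr 2
  exact Fin.ext (by simp [rightSite])

lemma firstHalf_comp_swap (x : Fin (2 * I) → Fin 2) (s r : Fin I) :
    firstHalf (x ∘ Equiv.swap (leftSite s) (rightSite r)) =
      Function.update (firstHalf x) s (secondHalf x r) := by
  funext k
  rcases eq_or_ne k s with rfl | hks
  · simp [firstHalf_apply, secondHalf_apply]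
  · rw [Function.update_of_ne hks, firstHalf_apply, firstHalf_apply, Function.comp_apply,
      Equiv.swap_apply_of_ne_of_ne (leftSite_injective.ne hks) (leftSite_ne_rightSite k r)]

lemma secondHalf_comp_swap (x : Fin (2 * I) → Fin 2) (s r : Fin I) :
    secondHalf (x ∘ Equiv.swap (leftSite s) (rightSite r)) =
      Function.update (secondHalf x) r (firstHalf x s) := by
  funext k
  rcases eq_or_ne k r with rfl | hkr
  · simp [firstHalf_apply, secondHalf_apply]
  · rw [Function.update_of_ne hkr, secondHalf_apply, secondHalf_apply, Function.comp_apply,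
      Equiv.swap_apply_of_ne_of_ne (leftSite_ne_rightSite s k).symm
        (rightSite_injective.ne hkr)]

lemma comp_swap_eq_halvesEquiv_symm (x : Fin (2 * I) → Fin 2) (s r : Fin I) :
    x ∘ Equiv.swap (leftSite s) (rightSite r) = (halvesEquiv I).symm
      (Function.update (firstHalf x) s (secondHalf x r),
        Function.update (secondHalf x) r (firstHalf x s)) := by
  rw [← firstHalf_comp_swap, ← secondHalf_comp_swap]
  exact ((halvesEquiv I).symm_apply_apply _).symm

end Halves

section Intervals

variable {I : ℕ}

def intervalCfg (I l h : ℕ) : Fin I → Fin 2 := fun k => if l ≤ k ∧ (k : ℕ) < h then 1 else 0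

lemma tot_intervalCfg {l h : ℕ} (hh : h ≤ I) : tot (intervalCfg I l h) = h - l := by
  have hval (k : ℕ) : ((if l ≤ k ∧ k < h then 1 else 0 : Fin 2) : ℕ) =
      if l ≤ k ∧ k < h then 1 else 0 := by split_ifs <;> rfl
  simp only [tot, intervalCfg, hval]
  rw [Fin.sum_univ_eq_sum_range (fun k => if l ≤ k ∧ k < h then 1 else 0), Finset.sum_boole,
    show (Finset.range I).filter (fun k => l ≤ k ∧ k < h) = Finset.Ico l h by ext; simp; omega]
  simp

lemma intervalCfg_apply_right {l h : ℕ} (hh : h < I) : intervalCfg I l h ⟨h, hh⟩ = 0 := by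
  simp [intervalCfg]

lemma intervalCfg_apply_left {l h : ℕ} (hlh : l < h) (hl : l < I) :
    intervalCfg I l h ⟨l, hl⟩ = 1 := by
  simp [intervalCfg, hlh]

lemma update_intervalCfg_right {l h : ℕ} (hlh : l ≤ h) (hh : h < I) :
    Function.update (intervalCfg I l h) ⟨h, hh⟩ 1 = intervalCfg I l (h + 1) := by
  funext k
  rcases eq_or_ne k ⟨h, hh⟩ with rfl | hk
  · simp [intervalCfg, hlh]
  · have : (k : ℕ) ≠ h := fun h' => hk (Fin.ext h')
    simp only [Function.update_of_ne hk, intervalCfg]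
    split_ifs <;> first | rfl | (exfalso; omega)

lemma update_intervalCfg_left {l h : ℕ} (hl : l < I) :
    Function.update (intervalCfg I l h) ⟨l, hl⟩ 0 = intervalCfg I (l + 1) h := by
  funext k
  rcases eq_or_ne k ⟨l, hl⟩ with rfl | hk
  · simp [intervalCfg]
  · have : (k : ℕ) ≠ l := fun h' => hk (Fin.ext h')
    simp only [Function.update_of_ne hk, intervalCfg]
    split_ifs <;> first | rfl | (exfalso; omega)

end Intervals

section Projections

variable {I : ℕ}

lemma tot_le (x : Fin I → Fin 2) : tot x ≤ I :=
  (Finset.sum_le_sum fun k _ => Nat.lt_succ_iff.1 (x k).isLt).trans (by simp)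

lemma PiMat_apply (m : Fin (I + 1)) (x : Fin I → Fin 2) :
    PiMat I m x = if tot x = m then 1 else 0 :=
  rfl

lemma sum_PiMat (x : Fin I → Fin 2) : ∑ m, PiMat I m x = 1 := by
  simp only [PiMat_apply]
  rw [Fin.sum_univ_eq_sum_range (fun m => if tot x = m then (1 : ℂ) else 0)]
  exact (Finset.sum_ite_eq _ _ _).trans
    (if_pos (Finset.mem_range.2 (Nat.lt_succ_of_le (tot_le x))))

lemma one_vecMul_PiPiMat : 1 ᵥ* PiPiMat I = 1 := by
  funext x
  simp [vecMul, dotProduct, PiPiMat, Fintype.sum_prod_type, ← Finset.sum_mul_sum, sum_PiMat]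

lemma PiPiMat_nonneg (p : Fin (I + 1) × Fin (I + 1)) (x : Fin (2 * I) → Fin 2) :
    0 ≤ PiPiMat I p x := by
  unfold PiPiMat PiMat
  split_ifs <;> simp

lemma PiPiMat_apply_pos {p : Fin (I + 1) × Fin (I + 1)} {x : Fin (2 * I) → Fin 2}
    (h₁ : tot (firstHalf x) = p.1) (h₂ : tot (secondHalf x) = p.2) : 0 < PiPiMat I p x := by
  simp [PiPiMat, PiMat_apply, h₁, h₂]

lemma PiPiMat_conserves :
    (PiPiMat I).Conserves (fun p => (p.1 : ℕ) + p.2) tot := by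
  intro p x hpx
  simp only [PiPiMat, PiMat_apply, ne_eq, mul_eq_zero, ite_eq_right_iff, one_ne_zero, imp_false,
    not_or, not_not] at hpx
  rw [tot_eq_tot_firstHalf_add_tot_secondHalf, hpx.1, hpx.2]

end Projections

section HatProjections

variable {I : ℕ}

lemma hatPiMat_apply (q : ℂ) (x : Fin I → Fin 2) (m : Fin (I + 1)) :
    hatPiMat I q x m = if tot x = m then q ^ invCount x / Zq I q m else 0 :=
  rfl

lemma hatPiPiMat_conserves (q : ℂ) :
    (hatPiPiMat I q).Conserves tot fun p => (p.1 : ℕ) + p.2 := by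
  intro x p hxp
  simp only [hatPiPiMat, hatPiMat_apply, ne_eq, mul_eq_zero, ite_eq_right_iff, not_or,
    Classical.not_imp] at hxp
  rw [tot_eq_tot_firstHalf_add_tot_secondHalf, hxp.1.1, hxp.2.1]

variable {q : ℝ}

lemma Zq_pos (hq0 : 0 < q) {m : ℕ} (hm : m ≤ I) : 0 < Zq I (q : ℂ) m :=
  Finset.sum_pos (fun _ _ => pow_pos (Complex.zero_lt_real.2 hq0) _)
    ⟨intervalCfg I 0 m, Finset.mem_filter.2 ⟨Finset.mem_univ _, tot_intervalCfg hm⟩⟩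

lemma hatPiMat_apply_pos (hq0 : 0 < q) {x : Fin I → Fin 2} {m : Fin (I + 1)} (h : tot x = m) :
    0 < hatPiMat I (q : ℂ) x m := by
  rw [hatPiMat_apply, if_pos h]
  exact div_pos (pow_pos (Complex.zero_lt_real.2 hq0) _) (Zq_pos hq0 (Nat.lt_succ_iff.1 m.isLt))

lemma hatPiMat_nonneg (hq0 : 0 < q) (x : Fin I → Fin 2) (m : Fin (I + 1)) :
    0 ≤ hatPiMat I (q : ℂ) x m := by
  by_cases h : tot x = m
  · exact (hatPiMat_apply_pos hq0 h).le
  · rw [hatPiMat_apply, if_neg h]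

lemma sum_hatPiMat (hq0 : 0 < q) (m : Fin (I + 1)) : ∑ x, hatPiMat I (q : ℂ) x m = 1 := by
  simp only [hatPiMat_apply]
  rw [← Finset.sum_filter, ← Finset.sum_div]
  exact div_self (Zq_pos hq0 (Nat.lt_succ_iff.1 m.isLt)).ne'

lemma one_vecMul_hatPiPiMat (hq0 : 0 < q) : 1 ᵥ* hatPiPiMat I (q : ℂ) = 1 := by
  funext p
  simp only [vecMul, dotProduct, Pi.one_apply, one_mul, hatPiPiMat]
  rw [sum_firstHalf_mul_secondHalf (hatPiMat I q · p.1) (hatPiMat I q · p.2), sum_hatPiMat hq0,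
    sum_hatPiMat hq0, one_mul]

lemma hatPiPiMat_nonneg (hq0 : 0 < q) (x : Fin (2 * I) → Fin 2) (p : Fin (I + 1) × Fin (I + 1)) :
    0 ≤ hatPiPiMat I (q : ℂ) x p :=
  mul_nonneg (hatPiMat_nonneg hq0 _ _) (hatPiMat_nonneg hq0 _ _)

lemma hatPiPiMat_apply_pos (hq0 : 0 < q) {x : Fin (2 * I) → Fin 2} {p : Fin (I + 1) × Fin (I + 1)}
    (h₁ : tot (firstHalf x) = p.1) (h₂ : tot (secondHalf x) = p.2) :
    0 < hatPiPiMat I (q : ℂ) x p :=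
  mul_pos (hatPiMat_apply_pos hq0 h₁) (hatPiMat_apply_pos hq0 h₂)

end HatProjections

section FusedBulk

variable {I : ℕ}

/-- The factor `R(u q^{b-a})_{b,a+I}` of `R̊^I(u)`, with `r = a - 1` and `s = b - 1`. -/
noncomputable def bulkFactor (I : ℕ) (q u : ℂ) (r s : Fin I) :
    Matrix (Fin (2 * I) → Fin 2) (Fin (2 * I) → Fin 2) ℂ :=
  emb2 (leftSite s) (rightSite r) (Rmat q (u * q ^ ((s : ℤ) - r)))

lemma Rring_eq_prod_ofFn (q u : ℂ) :
    Rring I q u = (List.ofFn fun k : Fin I => (List.ofFn (bulkFactor I q u k.rev)).prod).prod := by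
  simp only [Rring, List.ofFn_eq_map]
  congr; funext k; congr; funext s
  have hk := k.isLt
  rw [bulkFactor]
  congr 3
  · rw [Fin.val_rev]; omega
  · rw [Fin.val_rev, Nat.cast_sub (by omega)]; push_cast; ring_nf

lemma Rring_mem_of_bulkFactor_mem {q u : ℂ}
    {S : Submonoid (Matrix (Fin (2 * I) → Fin 2) (Fin (2 * I) → Fin 2) ℂ)}
    (hS : ∀ r s, bulkFactor I q u r s ∈ S) : Rring I q u ∈ S := by
  rw [Rring_eq_prod_ofFn]
  refine S.list_prod_mem fun M hM => ?_
  obtain ⟨k, rfl⟩ := List.mem_ofFn.1 hM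
  refine S.list_prod_mem fun M hM => ?_
  obtain ⟨s, rfl⟩ := List.mem_ofFn.1 hM
  exact hS _ _

variable {q κ : ℝ}

lemma exists_bulk_param_mem_Ioo (hq0 : 0 < q) (hq1 : q < 1) (hκ0 : 0 < κ)
    (hκ1 : κ < q ^ (((I : ℝ) - 1) / 2)) (r s : Fin I) :
    ∃ u ∈ Set.Ioo (0 : ℝ) 1, (κ : ℂ) ^ 2 * (q : ℂ) ^ ((s : ℤ) - r) = u := by
  refine ⟨κ ^ 2 * q ^ ((s : ℤ) - r), ⟨by positivity, ?_⟩, by push_cast; rfl⟩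
  have hκ2 : κ ^ 2 < q ^ ((I : ℤ) - 1) := by
    calc κ ^ 2 < (q ^ (((I : ℝ) - 1) / 2)) ^ 2 := pow_lt_pow_left₀ hκ1 hκ0.le two_ne_zero
      _ = q ^ ((I : ℤ) - 1) := by
        rw [← Real.rpow_natCast, ← Real.rpow_mul hq0.le, ← Real.rpow_intCast]
        push_cast; ring_nf
  have hr := r.isLt
  calc κ ^ 2 * q ^ ((s : ℤ) - r) < q ^ ((I : ℤ) - 1) * q ^ ((s : ℤ) - r) :=
        mul_lt_mul_of_pos_right hκ2 (zpow_pos hq0 _)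
    _ = q ^ (((I - 1 - r + s : ℕ)) : ℤ) := by
        rw [← zpow_add₀ hq0.ne']; congr 1; push_cast [Nat.sub_sub]; omega
    _ ≤ 1 := by rw [zpow_natCast]; exact pow_le_one₀ hq0.le hq1.le

lemma bulkFactor_mem_conservingSubmonoid (q u : ℂ) (r s : Fin I) :
    bulkFactor I q u r s ∈ conservingSubmonoid ℂ (tot (n := 2 * I)) :=
  emb2_mem_conservingSubmonoid (leftSite_ne_rightSite s r) (Rmat_mem_conservingSubmonoid _ _)

lemma bulkFactor_mem_colStochastic (hq0 : 0 < q) (hq1 : q < 1) (hκ0 : 0 < κ)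
    (hκ1 : κ < q ^ (((I : ℝ) - 1) / 2)) (r s : Fin I) :
    bulkFactor I q ((κ : ℂ) ^ 2) r s ∈ colStochastic ℂ (Fin (2 * I) → Fin 2) := by
  obtain ⟨u, ⟨hu0, hu1⟩, hu⟩ := exists_bulk_param_mem_Ioo hq0 hq1 hκ0 hκ1 r s
  rw [bulkFactor, hu]
  exact emb2_mem_colStochastic (leftSite_ne_rightSite s r) (Rmat_mem_colStochastic hq0 hq1 hu0 hu1)

lemma bulkFactor_mem_nonnegPosDiag (hq0 : 0 < q) (hq1 : q < 1) (hκ0 : 0 < κ)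
    (hκ1 : κ < q ^ (((I : ℝ) - 1) / 2)) (r s : Fin I) :
    bulkFactor I q ((κ : ℂ) ^ 2) r s ∈ nonnegPosDiag (Fin (2 * I) → Fin 2) ℂ := by
  obtain ⟨u, ⟨hu0, hu1⟩, hu⟩ := exists_bulk_param_mem_Ioo hq0 hq1 hκ0 hκ1 r s
  rw [bulkFactor, hu]
  exact emb2_mem_nonnegPosDiag (Rmat_mem_nonnegPosDiag hq0 hq1 hu0 hu1)

lemma bulkFactor_apply_comp_swap_pos (hq0 : 0 < q) (hq1 : q < 1) (hκ0 : 0 < κ)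
    (hκ1 : κ < q ^ (((I : ℝ) - 1) / 2)) (r s : Fin I) (x : Fin (2 * I) → Fin 2) :
    0 < bulkFactor I q ((κ : ℂ) ^ 2) r s (x ∘ Equiv.swap (leftSite s) (rightSite r)) x := by
  obtain ⟨u, ⟨hu0, hu1⟩, hu⟩ := exists_bulk_param_mem_Ioo hq0 hq1 hκ0 hκ1 r s
  rw [bulkFactor, hu, emb2_apply_comp_swap]
  exact Rmat_apply_pos hq0 hq1 hu0 hu1 (add_comm _ _)

lemma Rring_apply_pos_of_swaps (hq0 : 0 < q) (hq1 : q < 1) (hκ0 : 0 < κ)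
    (hκ1 : κ < q ^ (((I : ℝ) - 1) / 2)) {off m : ℕ} (hm : off + m ≤ I) (p : Fin m → Fin I)
    (w : ℕ → Fin (2 * I) → Fin 2)
    (hw : ∀ t : Fin m,
      w (t + 1) = w t ∘ Equiv.swap (leftSite (p t)) (rightSite ⟨off + t, by omega⟩)) :
    0 < Rring I q ((κ : ℂ) ^ 2) (w m) (w 0) := by
  have hfactors (k : Fin I) :
      ∀ M ∈ List.ofFn (bulkFactor I q ((κ : ℂ) ^ 2) k.rev), M ∈ nonnegPosDiag _ ℂ :=
    fun M hM => by
      obtain ⟨s, rfl⟩ := List.mem_ofFn.1 hM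
      exact bulkFactor_mem_nonnegPosDiag hq0 hq1 hκ0 hκ1 _ _
  have hblock (k : Fin I) := Submonoid.list_prod_mem _ (hfactors k)
  -- Block `k` involves the right site `I - 1 - k`, and the blocks act in increasing order of that
  -- site: block `I - 1 - off - t` performs the `t`-th swap and every other block acts diagonally.
  have key := ofFn_prod_apply_pos _ hblock (fun k : Fin (I + 1) => w (min m (I - k - off))) ?_
  · rw [Rring_eq_prod_ofFn]
    convert key using 2 <;> simp only [Fin.val_zero, Fin.val_last] <;> congr 1 <;> omega
  intro k
  have hk := k.isLt
  simp only [Fin.val_castSucc, Fin.val_succ]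
  by_cases hact : off + 1 + k ≤ I ∧ I < off + m + 1 + k
  · let t : Fin m := ⟨I - 1 - k - off, by omega⟩
    rw [show min m (I - k - off) = t + 1 by simp only [t]; omega,
      show min m (I - (k + 1) - off) = t by simp only [t]; omega, hw t]
    have hrev : k.rev = ⟨off + t, by omega⟩ := Fin.ext (by simp only [Fin.val_rev, t]; omega)
    refine list_prod_apply_pos_of_mem (hfactors k) (List.mem_ofFn.2 ⟨p t, rfl⟩) ?_
    rw [hrev]
    exact bulkFactor_apply_comp_swap_pos hq0 hq1 hκ0 hκ1 _ _ _
  · rw [show min m (I - k - off) = min m (I - (k + 1) - off) by omega]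
    exact (hblock k).2 _

lemma exists_Rring_apply_pos (hq0 : 0 < q) (hq1 : q < 1) (hκ0 : 0 < κ)
    (hκ1 : κ < q ^ (((I : ℝ) - 1) / 2)) {a b c d : ℕ} (ha : a ≤ I) (hb : b ≤ I) (hc : c ≤ I)
    (hd : d ≤ I) (h : a + b = c + d) :
    ∃ x y, tot (firstHalf x) = d ∧ tot (secondHalf x) = c ∧ tot (firstHalf y) = b ∧
      tot (secondHalf y) = a ∧ 0 < Rring I q ((κ : ℂ) ^ 2) x y := by
  rcases le_total b d with hbd | hdb
  · -- `d - b` particles hop, one at a time, from the right half `[t, a)` into the left half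
    -- `[0, b + t)`
    let w (t : ℕ) := (halvesEquiv I).symm (intervalCfg I 0 (b + t), intervalCfg I t a)
    refine ⟨w (d - b), w 0, ?_, ?_, ?_, ?_, Rring_apply_pos_of_swaps hq0 hq1 hκ0 hκ1
      (off := 0) (by omega) (fun t => ⟨b + t, by omega⟩) w fun t => ?_⟩
    rotate_left 4
    · rw [comp_swap_eq_halvesEquiv_symm]
      simp only [w, firstHalf_halvesEquiv_symm, secondHalf_halvesEquiv_symm, zero_add]
      rw [intervalCfg_apply_left (by omega), intervalCfg_apply_right,
        update_intervalCfg_right (by omega), update_intervalCfg_left, add_assoc]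
    all_goals
      simp only [w, firstHalf_halvesEquiv_symm, secondHalf_halvesEquiv_symm]
      rw [tot_intervalCfg (by omega)]
      omega
  · -- `b - d` particles hop, one at a time, from the left half `[t, b)` into the right half
    -- `[0, a + t)`
    let w (t : ℕ) := (halvesEquiv I).symm (intervalCfg I t b, intervalCfg I 0 (a + t))
    refine ⟨w (b - d), w 0, ?_, ?_, ?_, ?_, Rring_apply_pos_of_swaps hq0 hq1 hκ0 hκ1
      (off := a) (by omega) (fun t => ⟨t, by omega⟩) w fun t => ?_⟩
    rotate_left 4
    · rw [comp_swap_eq_halvesEquiv_symm]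
      simp only [w, firstHalf_halvesEquiv_symm, secondHalf_halvesEquiv_symm]
      rw [intervalCfg_apply_left (by omega), intervalCfg_apply_right,
        update_intervalCfg_right (by omega), update_intervalCfg_left, add_assoc]
    all_goals
      simp only [w, firstHalf_halvesEquiv_symm, secondHalf_halvesEquiv_symm]
      rw [tot_intervalCfg (by omega)]
      omega

end FusedBulk

theorem fused_R_stochastic_general (I : ℕ) (q κ : ℝ)
    (hq0 : 0 < q) (hq1 : q < 1) (hκ0 : 0 < κ) (hκ1 : κ < q ^ (((I : ℝ) - 1) / 2)) :
    (∀ a b c d : Fin (I + 1), (a : ℕ) + (b : ℕ) ≠ (c : ℕ) + (d : ℕ) →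
      RI I (q : ℂ) ((κ : ℂ) ^ 2) (d, c) (b, a) = 0) ∧
    (∀ a b c d : Fin (I + 1), (a : ℕ) + (b : ℕ) = (c : ℕ) + (d : ℕ) →
      0 < RI I (q : ℂ) ((κ : ℂ) ^ 2) (d, c) (b, a)) ∧
    (∀ a b : Fin (I + 1),
      ∑ c : Fin (I + 1), ∑ d : Fin (I + 1), RI I (q : ℂ) ((κ : ℂ) ^ 2) (d, c) (b, a) = 1) := by
  have hstoch : Rring I q ((κ : ℂ) ^ 2) ∈ colStochastic ℂ _ :=
    Rring_mem_of_bulkFactor_mem (bulkFactor_mem_colStochastic hq0 hq1 hκ0 hκ1)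
  have hcons : Rring I q ((κ : ℂ) ^ 2) ∈ conservingSubmonoid ℂ tot :=
    Rring_mem_of_bulkFactor_mem (bulkFactor_mem_conservingSubmonoid _ _)
  refine ⟨fun a b c d hne => ?_, fun a b c d h => ?_, fun a b => ?_⟩
  · by_contra hRI
    have hsum := (PiPiMat_conserves.mul hcons).mul (hatPiPiMat_conserves _) _ _ hRI
    simp only at hsum
    omega
  · obtain ⟨x, y, hx₁, hx₂, hy₁, hy₂, hxy⟩ := exists_Rring_apply_pos hq0 hq1 hκ0 hκ1
      (Nat.lt_succ_iff.1 a.isLt) (Nat.lt_succ_iff.1 b.isLt) (Nat.lt_succ_iff.1 c.isLt)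
      (Nat.lt_succ_iff.1 d.isLt) h
    refine mul_apply_pos (fun _ _ => ?_) (hatPiPiMat_nonneg hq0)
      (mul_apply_pos PiPiMat_nonneg hstoch.1 (PiPiMat_apply_pos hx₁ hx₂) hxy)
      (hatPiPiMat_apply_pos hq0 hy₁ hy₂)
    exact Finset.sum_nonneg fun _ _ => mul_nonneg (PiPiMat_nonneg _ _) (hstoch.1 _ _)
  · have h1 : 1 ᵥ* RI I q ((κ : ℂ) ^ 2) = 1 := by
      rw [RI, ← vecMul_vecMul, ← vecMul_vecMul, one_vecMul_PiPiMat, hstoch.2,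
        one_vecMul_hatPiPiMat hq0]
    rw [Finset.sum_comm, ← Fintype.sum_prod_type']
    simpa [vecMul, dotProduct] using congrFun h1 (b, a)

/-- **Stochasticity, conservation and positivity of the fused bulk vertex weights**
`𝚁_{a,b}^{c,d} := R^I(κ²)_{b,a}^{d,c}` for `0 < q < 1` and `0 < κ < q^{(I−1)/2}`:
(i) they vanish unless `a + b = c + d`; (ii) they are real and strictly positive when
`a + b = c + d` (positivity in the `ComplexOrder`); (iii) rows sum to one. -/
theorem fused_R_stochastic (I : ℕ) (hI : 1 ≤ I) (q κ : ℝ)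
    (hq0 : 0 < q) (hq1 : q < 1) (hκ0 : 0 < κ) (hκ1 : κ < q ^ (((I : ℝ) - 1) / 2)) :
    (∀ a b c d : Fin (I + 1), (a : ℕ) + (b : ℕ) ≠ (c : ℕ) + (d : ℕ) →
      RI I (q : ℂ) ((κ : ℂ) ^ 2) (d, c) (b, a) = 0) ∧
    (∀ a b c d : Fin (I + 1), (a : ℕ) + (b : ℕ) = (c : ℕ) + (d : ℕ) →
      0 < RI I (q : ℂ) ((κ : ℂ) ^ 2) (d, c) (b, a)) ∧
    (∀ a b : Fin (I + 1),
      ∑ c : Fin (I + 1), ∑ d : Fin (I + 1), RI I (q : ℂ) ((κ : ℂ) ^ 2) (d, c) (b, a) = 1) :=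
  fused_R_stochastic_general I q κ hq0 hq1 hκ0 hκ1
end
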